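/- arXiv:1002.2209 — 6 statements merged into one kernel-verified Lean document; each statement's English description precedes it below -/
import Mathlib

section
/- Let k be a positive integer, and for each i ∈ {1,…,k} let ‖·‖_i be a norm defined on a linear subspace V_i of ℂ^n, with V_1 + ⋯ + V_k = ℂ^n. Let α_1,…,α_k be positive real numbers, and let x ∈ ℂ^n. Suppose that it is not possible to write x = x_1 + ⋯ + x_k with x_i ∈ V_i for each i and α_1‖x_1‖_1 + ⋯ + α_k‖x_k‖_k ≤ 1. Then there exists z ∈ ℂ^n such that |⟨x,z⟩| ≥ 1 and such that ‖z‖_i^* ≤ α_i for every i (equivalently, |⟨y,z⟩| ≤ α_i for every i and every y ∈ V_i with ‖y‖_i ≤ 1). -/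
open scoped BigOperators

/-- The standard inner product `⟨x, z⟩ = ∑ⱼ xⱼ · conj(zⱼ)` on `ℂⁿ`. -/
noncomputable def ip {n : ℕ} (x z : Fin n → ℂ) : ℂ := ∑ j, x j * star (z j)

/-- The dual (semi)norm of a norm `N` defined on a subset `V` of `ℂⁿ`:
`‖z‖* = sup {|⟨x,z⟩| : x ∈ V, N x ≤ 1}`. -/
noncomputable def dualOn {n : ℕ} (V : Set (Fin n → ℂ)) (N : (Fin n → ℂ) → ℝ)
    (z : Fin n → ℂ) : ℝ :=
  sSup {r : ℝ | ∃ x ∈ V, N x ≤ 1 ∧ r = ‖ip x z‖}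

/-- The infimal combination norm
`‖x‖ = inf {N₁ x₁ + ⋯ + N_k x_k : xᵢ ∈ Vᵢ, x₁ + ⋯ + x_k = x}`. -/
noncomputable def infNorm {n k : ℕ} (V : Fin k → Submodule ℂ (Fin n → ℂ))
    (N : Fin k → (Fin n → ℂ) → ℝ) (x : Fin n → ℂ) : ℝ :=
  sInf {r : ℝ | ∃ xs : Fin k → (Fin n → ℂ),
    (∀ i, xs i ∈ V i) ∧ (∑ i, xs i) = x ∧ r = ∑ i, N i (xs i)}

/-- `N` is a norm on the subspace `V`. -/
def IsNormOn {n : ℕ} (V : Submodule ℂ (Fin n → ℂ)) (N : (Fin n → ℂ) → ℝ) : Prop :=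
  (∀ x ∈ V, (N x = 0 ↔ x = 0)) ∧
  (∀ (a : ℂ), ∀ x ∈ V, N (a • x) = ‖a‖ * N x) ∧
  (∀ x ∈ V, ∀ y ∈ V, N (x + y) ≤ N x + N y)

/-!
Let `p` be the infimal convolution of the weighted norms `αᵢ‖·‖ᵢ`: `p v` is the infimum of
`∑ αᵢ‖vᵢ‖ᵢ` over decompositions `v = v₁ + ⋯ + v_k` with `vᵢ ∈ Vᵢ`. Because the `Vᵢ` span `ℂⁿ`,
`p` is a finite seminorm; it satisfies `p ≤ αᵢ‖·‖ᵢ` on `Vᵢ`, and the hypothesis on `x` says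
exactly that `p x ≥ 1`. Hahn–Banach gives a linear functional `g` with `|g| ≤ p` and
`g x = p x`, and `z` is the vector representing `g`, i.e. `g = ⟨·, z⟩`.
-/

open Finset
open scoped Pointwise

section DecompositionSeminorm

variable {𝕜 E ι : Type*} [NormedField 𝕜] [AddCommGroup E] [Module 𝕜 E]

structure IsSeminormOn (V : Submodule 𝕜 E) (N : E → ℝ) : Prop where
  smul : ∀ (a : 𝕜), ∀ x ∈ V, N (a • x) = ‖a‖ * N x
  add_le : ∀ x ∈ V, ∀ y ∈ V, N (x + y) ≤ N x + N y

namespace IsSeminormOn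

variable {V : Submodule 𝕜 E} {N : E → ℝ}

def toSeminorm (h : IsSeminormOn V N) : Seminorm 𝕜 V :=
  Seminorm.of (fun v => N v) (fun x y => h.add_le x x.2 y y.2) (fun a x => h.smul a x x.2)

theorem nonneg (h : IsSeminormOn V N) {x : E} (hx : x ∈ V) : 0 ≤ N x :=
  apply_nonneg h.toSeminorm ⟨x, hx⟩

theorem map_zero (h : IsSeminormOn V N) : N 0 = 0 :=
  _root_.map_zero h.toSeminorm

theorem const_mul (h : IsSeminormOn V N) {c : ℝ} (hc : 0 ≤ c) :
    IsSeminormOn V (fun x => c * N x) where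
  smul a x hx := by rw [h.smul a x hx, mul_left_comm]
  add_le x hx y hy := by rw [← mul_add]; exact mul_le_mul_of_nonneg_left (h.add_le x hx y hy) hc

end IsSeminormOn

variable [Fintype ι] {V : ι → Submodule 𝕜 E} {N : ι → E → ℝ}

def decompositionCosts (V : ι → Submodule 𝕜 E) (N : ι → E → ℝ) (x : E) : Set ℝ :=
  {r | ∃ xs : ι → E, (∀ i, xs i ∈ V i) ∧ ∑ i, xs i = x ∧ r = ∑ i, N i (xs i)}

theorem decompositionCosts_nonempty (hV : ⨆ i, V i = ⊤) (x : E) :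
    (decompositionCosts V N x).Nonempty := by
  obtain ⟨f, hf, rfl⟩ := (Submodule.mem_iSup_iff_exists_finsupp V x).1 (hV ▸ Submodule.mem_top)
  exact ⟨_, f, hf, (Finsupp.sum_fintype f (fun _ xi => xi) fun _ => rfl).symm, rfl⟩

theorem nonneg_of_mem_decompositionCosts (hN : ∀ i, IsSeminormOn (V i) (N i)) {x : E} {r : ℝ}
    (hr : r ∈ decompositionCosts V N x) : 0 ≤ r := by
  obtain ⟨xs, hxs, -, rfl⟩ := hr
  exact sum_nonneg fun i _ => (hN i).nonneg (hxs i)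

theorem decompositionCosts_bddBelow (hN : ∀ i, IsSeminormOn (V i) (N i)) (x : E) :
    BddBelow (decompositionCosts V N x) :=
  ⟨0, fun _ hr => nonneg_of_mem_decompositionCosts hN hr⟩

theorem add_mem_decompositionCosts (hN : ∀ i, IsSeminormOn (V i) (N i)) {x y : E} {r s : ℝ}
    (hr : r ∈ decompositionCosts V N x) (hs : s ∈ decompositionCosts V N y) :
    ∃ t ∈ decompositionCosts V N (x + y), t ≤ r + s := by
  obtain ⟨xs, hxs, rfl, rfl⟩ := hr
  obtain ⟨ys, hys, rfl, rfl⟩ := hs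
  refine ⟨_, ⟨xs + ys, fun i => (V i).add_mem (hxs i) (hys i), by simp [sum_add_distrib], rfl⟩, ?_⟩
  rw [← sum_add_distrib]
  exact sum_le_sum fun i _ => (hN i).add_le _ (hxs i) _ (hys i)

theorem smul_decompositionCosts_subset (hN : ∀ i, IsSeminormOn (V i) (N i)) (a : 𝕜) (x : E) :
    ‖a‖ • decompositionCosts V N x ⊆ decompositionCosts V N (a • x) := by
  rintro _ ⟨_, ⟨xs, hxs, rfl, rfl⟩, rfl⟩
  refine ⟨a • xs, fun i => (V i).smul_mem a (hxs i), by simp [smul_sum], ?_⟩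
  simp [mul_sum, (hN _).smul a _ (hxs _)]

theorem zero_mem_decompositionCosts (hN : ∀ i, IsSeminormOn (V i) (N i)) :
    (0 : ℝ) ∈ decompositionCosts V N 0 :=
  ⟨0, fun i => (V i).zero_mem, by simp, by simp [(hN _).map_zero]⟩

theorem mem_decompositionCosts_of_mem (hN : ∀ i, IsSeminormOn (V i) (N i)) {i : ι} {y : E}
    (hy : y ∈ V i) : N i y ∈ decompositionCosts V N y := by
  classical
  refine ⟨Pi.single i y, fun j => ?_, by simp, ?_⟩
  · rcases eq_or_ne j i with rfl | hj
    · simpa using hy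
    · simp [hj, (V j).zero_mem]
  · rw [sum_eq_single i (fun j _ hj => by simp [hj, (hN j).map_zero]) (by simp)]
    simp

theorem sInf_decompositionCosts_add_le (hN : ∀ i, IsSeminormOn (V i) (N i))
    (hV : ⨆ i, V i = ⊤) (x y : E) :
    sInf (decompositionCosts V N (x + y)) ≤
      sInf (decompositionCosts V N x) + sInf (decompositionCosts V N y) := by
  have key : ∀ r ∈ decompositionCosts V N x, ∀ s ∈ decompositionCosts V N y,
      sInf (decompositionCosts V N (x + y)) ≤ r + s := fun r hr s hs => by
    obtain ⟨t, ht, hts⟩ := add_mem_decompositionCosts hN hr hs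
    exact (csInf_le (decompositionCosts_bddBelow hN _) ht).trans hts
  have h₁ : ∀ s ∈ decompositionCosts V N y,
      sInf (decompositionCosts V N (x + y)) - s ≤ sInf (decompositionCosts V N x) :=
    fun s hs => le_csInf (decompositionCosts_nonempty hV x) fun r hr => by
      linarith [key r hr s hs]
  have h₂ : sInf (decompositionCosts V N (x + y)) - sInf (decompositionCosts V N x) ≤
      sInf (decompositionCosts V N y) :=
    le_csInf (decompositionCosts_nonempty hV y) fun s hs => by linarith [h₁ s hs]
  linarith

theorem sInf_decompositionCosts_smul_le (hN : ∀ i, IsSeminormOn (V i) (N i))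
    (hV : ⨆ i, V i = ⊤) (a : 𝕜) (x : E) :
    sInf (decompositionCosts V N (a • x)) ≤ ‖a‖ * sInf (decompositionCosts V N x) := by
  rw [← smul_eq_mul, ← Real.sInf_smul_of_nonneg (norm_nonneg a)]
  exact csInf_le_csInf (decompositionCosts_bddBelow hN _)
    (decompositionCosts_nonempty hV x).smul_set (smul_decompositionCosts_subset hN a x)

/-- The infimal convolution of the `N i`: `infNorm` in this generality. -/
noncomputable def decompositionSeminorm (hN : ∀ i, IsSeminormOn (V i) (N i))
    (hV : ⨆ i, V i = ⊤) : Seminorm 𝕜 E :=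
  Seminorm.ofSMulLE (fun x => sInf (decompositionCosts V N x))
    (le_antisymm (csInf_le (decompositionCosts_bddBelow hN 0) (zero_mem_decompositionCosts hN))
      (le_csInf (decompositionCosts_nonempty hV 0)
        fun _ => nonneg_of_mem_decompositionCosts hN))
    (sInf_decompositionCosts_add_le hN hV) (sInf_decompositionCosts_smul_le hN hV)

section
variable (hN : ∀ i, IsSeminormOn (V i) (N i)) (hV : ⨆ i, V i = ⊤)
include hN hV

theorem decompositionSeminorm_le {x : E} {r : ℝ} (hr : r ∈ decompositionCosts V N x) :
    decompositionSeminorm hN hV x ≤ r :=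
  csInf_le (decompositionCosts_bddBelow hN x) hr

theorem le_decompositionSeminorm {x : E} {c : ℝ} (h : ∀ r ∈ decompositionCosts V N x, c ≤ r) :
    c ≤ decompositionSeminorm hN hV x :=
  le_csInf (decompositionCosts_nonempty hV x) h

theorem decompositionSeminorm_le_of_mem {i : ι} {y : E} (hy : y ∈ V i) :
    decompositionSeminorm hN hV y ≤ N i y :=
  decompositionSeminorm_le hN hV (mem_decompositionCosts_of_mem hN hy)

end

end DecompositionSeminorm

theorem Seminorm.exists_dual_le_eq {𝕜 E : Type*} [RCLike 𝕜] [AddCommGroup E] [Module 𝕜 E]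
    (p : Seminorm 𝕜 E) (x : E) :
    ∃ g : Module.Dual 𝕜 E, (∀ y, ‖g y‖ ≤ p y) ∧ g x = p x := by
  rcases eq_or_ne x 0 with rfl | hx
  · exact ⟨0, fun y => by simp, by simp⟩
  let f : Module.Dual 𝕜 (𝕜 ∙ x) := (p x : 𝕜) • (LinearEquiv.coord 𝕜 E x hx).toLinearMap
  have hf : ∀ y, ‖f y‖ = p y := fun y => calc
    ‖f y‖ = ‖LinearEquiv.coord 𝕜 E x hx y‖ * p x := by
      simp [f, norm_smul, mul_comm]
    _ = p y := by rw [← map_smul_eq_mul, LinearEquiv.coord_apply_smul]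
  obtain ⟨g, hgf, hgp⟩ :=
    Module.Dual.exists_extension_of_le_seminorm _ f (p := p) fun y => (hf y).le
  refine ⟨g, hgp, ?_⟩
  rw [hgf ⟨x, Submodule.mem_span_singleton_self x⟩]
  simp [f, LinearEquiv.coord_self, RCLike.real_smul_eq_coe_mul]

theorem exists_ip_eq {n : ℕ} (g : Module.Dual ℂ (Fin n → ℂ)) : ∃ z, ∀ v, ip v z = g v := by
  refine ⟨fun j => star (g (Pi.single j 1)), fun v => ?_⟩
  conv_rhs => rw [LinearMap.pi_apply_eq_sum_univ g v]
  simp only [ip, star_star, smul_eq_mul]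
  congr! with j k
  simp [Pi.single_apply, eq_comm]

theorem IsNormOn.isSeminormOn {n : ℕ} {V : Submodule ℂ (Fin n → ℂ)} {N : (Fin n → ℂ) → ℝ}
    (h : IsNormOn V N) : IsSeminormOn V N :=
  ⟨h.2.1, h.2.2⟩

theorem stmt3_general (n k : ℕ)
    (V : Fin k → Submodule ℂ (Fin n → ℂ)) (N : Fin k → (Fin n → ℂ) → ℝ)
    (hnorm : ∀ i, IsNormOn (V i) (N i))
    (hsum : (⨆ i, V i) = (⊤ : Submodule ℂ (Fin n → ℂ)))
    (α : Fin k → ℝ) (hα : ∀ i, 0 < α i) (x : Fin n → ℂ)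
    (hx : ¬ ∃ xs : Fin k → (Fin n → ℂ),
      (∀ i, xs i ∈ V i) ∧ (∑ i, xs i) = x ∧ (∑ i, α i * N i (xs i)) ≤ 1) :
    ∃ z : Fin n → ℂ, 1 ≤ ‖ip x z‖ ∧
      ∀ i, ∀ y ∈ V i, N i y ≤ 1 → ‖ip y z‖ ≤ α i := by
  have hαN : ∀ i, IsSeminormOn (V i) (fun v => α i * N i v) :=
    fun i => (hnorm i).isSeminormOn.const_mul (hα i).le
  set p := decompositionSeminorm hαN hsum
  have hpx : 1 ≤ p x := le_decompositionSeminorm hαN hsum fun r ⟨xs, hxs, hxs_sum, hr⟩ =>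
    hr ▸ (not_le.1 fun h => hx ⟨xs, hxs, hxs_sum, h⟩).le
  obtain ⟨g, hg_le, hgx⟩ := p.exists_dual_le_eq x
  obtain ⟨z, hz⟩ := exists_ip_eq g
  refine ⟨z, ?_, fun i y hy hNy => ?_⟩
  · rwa [hz, hgx, RCLike.norm_ofReal, abs_of_nonneg (apply_nonneg p x)]
  · calc ‖ip y z‖ = ‖g y‖ := by rw [hz]
      _ ≤ p y := hg_le y
      _ ≤ α i * N i y := decompositionSeminorm_le_of_mem hαN hsum hy
      _ ≤ α i := mul_le_of_le_one_right (hα i).le hNy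

/-- Corollary 2.3, Hahn–Banach separation. If `x` cannot be decomposed
as `x₁ + ⋯ + x_k` with `xᵢ ∈ Vᵢ` and `∑ αᵢ Nᵢ(xᵢ) ≤ 1`, then there is `z` with
`|⟨x,z⟩| ≥ 1` and `|⟨y,z⟩| ≤ αᵢ` for every `i` and every `y ∈ Vᵢ` with `Nᵢ y ≤ 1`. -/
theorem stmt3 (n k : ℕ) (hk : 0 < k)
    (V : Fin k → Submodule ℂ (Fin n → ℂ)) (N : Fin k → (Fin n → ℂ) → ℝ)
    (hnorm : ∀ i, IsNormOn (V i) (N i))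
    (hsum : (⨆ i, V i) = (⊤ : Submodule ℂ (Fin n → ℂ)))
    (α : Fin k → ℝ) (hα : ∀ i, 0 < α i) (x : Fin n → ℂ)
    (hx : ¬ ∃ xs : Fin k → (Fin n → ℂ),
      (∀ i, xs i ∈ V i) ∧ (∑ i, xs i) = x ∧ (∑ i, α i * N i (xs i)) ≤ 1) :
    ∃ z : Fin n → ℂ, 1 ≤ ‖ip x z‖ ∧
      ∀ i, ∀ y ∈ V i, N i y ≤ 1 → ‖ip y z‖ ≤ α i :=
  stmt3_general n k V N hnorm hsum α hα x hx
end

section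
/- Let p be a prime and ω = e^{2πi/p}. Let q be a quadratic form on 𝔽_p^n of rank r and let φ : 𝔽_p^n → 𝔽_p be a linear function. Then |𝔼_{x∈𝔽_p^n} ω^{q(x)+φ(x)}| ≤ p^{−r/2}. -/
open scoped BigOperators

instance instNeZeroOfFactPrime (p : ℕ) [hp : Fact p.Prime] : NeZero p :=
  ⟨hp.out.ne_zero⟩

/-- The vector space `𝔽_p^n`. -/
abbrev Vec (p n : ℕ) := Fin n → ZMod p

/-- `ω^t` where `ω = e^{2πi/p}`. -/
noncomputable def omg (p : ℕ) (t : ZMod p) : ℂ :=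
  Complex.exp (2 * Real.pi * Complex.I * (t.val : ℂ) / p)

/-- Average of a complex-valued function over a finite type. -/
noncomputable def avgC {α : Type*} [Fintype α] (f : α → ℂ) : ℂ :=
  (∑ x, f x) / (Fintype.card α : ℂ)

/-- Average of a real-valued function over a finite type. -/
noncomputable def avgR {α : Type*} [Fintype α] (f : α → ℝ) : ℝ :=
  (∑ x, f x) / (Fintype.card α : ℝ)

/-- The Gowers `U²` norm. -/
noncomputable def U2 {p n : ℕ} [NeZero p] (f : Vec p n → ℂ) : ℝ :=
  ‖avgC (fun t : Vec p n × Vec p n × Vec p n =>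
    f t.1 * star (f (t.1 + t.2.1)) * star (f (t.1 + t.2.2)) *
      f (t.1 + t.2.1 + t.2.2))‖ ^ ((1 : ℝ) / 4)

/-- The Gowers `U³` norm. -/
noncomputable def U3 {p n : ℕ} [NeZero p] (f : Vec p n → ℂ) : ℝ :=
  ‖avgC (fun t : Vec p n × Vec p n × Vec p n × Vec p n =>
    f t.1 * star (f (t.1 + t.2.1)) * star (f (t.1 + t.2.2.1)) *
      f (t.1 + t.2.1 + t.2.2.1) * star (f (t.1 + t.2.2.2)) *
      f (t.1 + t.2.1 + t.2.2.2) * f (t.1 + t.2.2.1 + t.2.2.2) *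
      star (f (t.1 + t.2.1 + t.2.2.1 + t.2.2.2)))‖ ^ ((1 : ℝ) / 8)

/-- `L¹` norm (with respect to the uniform probability measure). -/
noncomputable def L1 {p n : ℕ} [NeZero p] (f : Vec p n → ℂ) : ℝ :=
  avgR (fun x => ‖f x‖)

/-- `L²` norm (with respect to the uniform probability measure). -/
noncomputable def L2 {p n : ℕ} [NeZero p] (f : Vec p n → ℂ) : ℝ :=
  Real.sqrt (avgR (fun x => ‖f x‖ ^ 2))

/-- `L∞` norm. -/
noncomputable def Linf {p n : ℕ} [NeZero p] (f : Vec p n → ℂ) : ℝ :=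
  ⨆ x, ‖f x‖

/-- Normalized inner product `⟨f,g⟩ = 𝔼_x f(x) conj (g x)`. -/
noncomputable def inprod {p n : ℕ} [NeZero p] (f g : Vec p n → ℂ) : ℂ :=
  avgC (fun x => f x * star (g x))

/-- The dual of the `U²` norm. -/
noncomputable def U2dual {p n : ℕ} [NeZero p] (g : Vec p n → ℂ) : ℝ :=
  sSup {r : ℝ | ∃ f : Vec p n → ℂ, U2 f ≤ 1 ∧ r = ‖inprod f g‖}

/-- The elements of a submodule of `𝔽_p^n` as a `Finset`. -/
noncomputable def subFinset {p n : ℕ} [NeZero p] (V : Submodule (ZMod p) (Vec p n)) :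
    Finset (Vec p n) :=
  letI := Classical.decPred (fun v => v ∈ (V : Set (Vec p n)))
  Finset.univ.filter (fun v => v ∈ (V : Set (Vec p n)))

/-- Convolution `f * μ_V`, i.e. the average of `f` over the coset `x + V`. -/
noncomputable def convMu {p n : ℕ} [NeZero p] (f : Vec p n → ℂ)
    (V : Submodule (ZMod p) (Vec p n)) (x : Vec p n) : ℂ :=
  (∑ v ∈ subFinset V, f (x + v)) / ((subFinset V).card : ℂ)

/-- The associated symmetric form `β(u,v) = q(u+v) - q(u) - q(v)`. -/
def qbeta {p n : ℕ} (q : Vec p n → ZMod p) (u v : Vec p n) : ZMod p :=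
  q (u + v) - q u - q v

/-- `q` is a quadratic form on the subspace `V`: `q 0 = 0` and the associated
form `β` is (bi-)additive on `V`. -/
def IsQuadFormOn {p n : ℕ} (V : Submodule (ZMod p) (Vec p n))
    (q : Vec p n → ZMod p) : Prop :=
  q 0 = 0 ∧ ∀ u ∈ V, ∀ v ∈ V, ∀ w ∈ V, qbeta q u (v + w) = qbeta q u v + qbeta q u w

/-- The radical `{v ∈ V : β(u,v) = 0 for all u ∈ V}` of the form associated to `q`
(as the span of that set, which equals the set itself when `q` is quadratic). -/
noncomputable def qRadical {p n : ℕ} (V : Submodule (ZMod p) (Vec p n))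
    (q : Vec p n → ZMod p) : Submodule (ZMod p) (Vec p n) :=
  Submodule.span (ZMod p) {v | v ∈ V ∧ ∀ u ∈ V, qbeta q u v = 0}

/-- The rank of the quadratic form `q` on `V`: the codimension in `V` of the radical. -/
noncomputable def qRank {p n : ℕ} (V : Submodule (ZMod p) (Vec p n))
    (q : Vec p n → ZMod p) : ℕ :=
  Module.finrank (ZMod p) V - Module.finrank (ZMod p) (qRadical V q)

/-- `Q` is a quadratic average with base `(V, q)`:
`Q(x) = 𝔼_{y ∈ x+V} ω^{q(x-y) + φ_y(x-y)}` with each `φ_y` linear on `V`.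
(Parametrizing `y = x - v` with `v ∈ V`, this reads `Q(x) = 𝔼_{v ∈ V} ω^{q(v) + φ_{x-v}(v)}`.) -/
def IsQuadAvgWith {p n : ℕ} [NeZero p] (V : Submodule (ZMod p) (Vec p n))
    (q : Vec p n → ZMod p) (Q : Vec p n → ℂ) : Prop :=
  IsQuadFormOn V q ∧
  ∃ φ : Vec p n → Vec p n → ZMod p,
    (∀ y, ∀ u ∈ V, ∀ v ∈ V, φ y (u + v) = φ y u + φ y v) ∧
    ∀ x, Q x = (∑ v ∈ subFinset V, omg p (q v + φ (x - v) v)) / ((subFinset V).card : ℂ)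

/-- The radical of a bilinear form `β` restricted to the subspace `W`. -/
noncomputable def bRadical {p n : ℕ} (W : Submodule (ZMod p) (Vec p n))
    (β : Vec p n →ₗ[ZMod p] Vec p n →ₗ[ZMod p] ZMod p) :
    Submodule (ZMod p) (Vec p n) :=
  Submodule.span (ZMod p) {y | y ∈ W ∧ ∀ x ∈ W, β x y = 0}

/-- The rank of the bilinear form `β` restricted to the subspace `W`. -/
noncomputable def bRankOn {p n : ℕ} (W : Submodule (ZMod p) (Vec p n))
    (β : Vec p n →ₗ[ZMod p] Vec p n →ₗ[ZMod p] ZMod p) : ℕ :=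
  Module.finrank (ZMod p) W - Module.finrank (ZMod p) (bRadical W β)

open ComplexConjugate Finset

/-! Squaring gives `|∑ₓ ω^{f x}|² = ∑ₕ ∑ᵧ ω^{f (y + h) - f y}`, and for `f = q + φ` the
difference `f (y + h) - f y = f h + β(y, h)` is affine in `y`. The inner sum over `y` is then a
character sum, which vanishes unless `h` lies in the radical of `β`; hence
`|∑ₓ ω^{f x}|² ≤ p^n · p^{n-r}`. -/

theorem sum_mul_conj_sum {G : Type*} [AddCommGroup G] [Fintype G] (f : G → ℂ) :
    (∑ x, f x) * conj (∑ x, f x) = ∑ h, ∑ y, f (y + h) * conj (f y) := by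
  rw [map_sum, sum_mul_sum, sum_comm]
  conv_rhs => rw [sum_comm]
  refine Fintype.sum_congr _ _ fun y => ?_
  exact (Fintype.sum_equiv (Equiv.addLeft y) _ _ fun h => rfl).symm

namespace AddChar

variable {G A : Type*} [AddCommGroup G] [Fintype G] [AddCommGroup A]

theorem sum_apply_addMonoidHom (ψ : AddChar A ℂ) (hψ : Function.Injective ψ) (χ : G →+ A)
    [Decidable (χ = 0)] :
    ∑ y, ψ (χ y) = if χ = 0 then (Fintype.card G : ℂ) else 0 := by
  have hzero : ψ.compAddMonoidHom χ = 0 ↔ χ = 0 := by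
    rw [← (ψ.compAddMonoidHom_injective_right hψ).eq_iff]
    exact Iff.of_eq (congrArg (_ = ·) (by ext; simp))
  simpa only [compAddMonoidHom_apply, hzero] using sum_eq_ite (ψ.compAddMonoidHom χ)

variable [Finite A] (ψ : AddChar A ℂ) {g : G → A} {β : G → G →+ A}

theorem sum_mul_conj_sum_of_polarization (hψ : Function.Injective ψ)
    (hg : ∀ y h, g (y + h) = g y + g h + β h y)
    [DecidablePred fun h => β h = 0] :
    (∑ x, ψ (g x)) * conj (∑ x, ψ (g x)) =
      Fintype.card G * ∑ h with β h = 0, ψ (g h) := by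
  have hshift : ∀ h, ∑ y, ψ (g (y + h)) * conj (ψ (g y)) =
      ψ (g h) * if β h = 0 then (Fintype.card G : ℂ) else 0 := fun h => by
    simp_rw [← sum_apply_addMonoidHom ψ hψ (β h), mul_sum, hg, map_add_eq_mul]
    refine Fintype.sum_congr _ _ fun y => ?_
    have hunit : ψ (g y) * conj (ψ (g y)) = 1 := by simp [Complex.mul_conj', ψ.norm_apply]
    linear_combination ψ (g h) * ψ (β h y) * hunit
  simp_rw [sum_mul_conj_sum, hshift, mul_ite, mul_zero, ← sum_filter, mul_sum,
    mul_comm]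

theorem norm_sum_sq_le_card_mul_card_radical (hψ : Function.Injective ψ)
    (hg : ∀ y h, g (y + h) = g y + g h + β h y)
    [DecidablePred fun h => β h = 0] :
    ‖∑ x, ψ (g x)‖ ^ 2 ≤ Fintype.card G * #{h | β h = 0} := by
  calc ‖∑ x, ψ (g x)‖ ^ 2 = ‖(∑ x, ψ (g x)) * conj (∑ x, ψ (g x))‖ := by
        rw [norm_mul, RCLike.norm_conj, sq]
    _ = Fintype.card G * ‖∑ h with β h = 0, ψ (g h)‖ := by
        rw [sum_mul_conj_sum_of_polarization ψ hψ hg, norm_mul, Complex.norm_natCast]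
    _ ≤ Fintype.card G * #{h | β h = 0} := by
        gcongr
        exact (norm_sum_le _ _).trans_eq (by simp [ψ.norm_apply])

end AddChar

theorem omg_eq_stdAddChar (p : ℕ) [NeZero p] (t : ZMod p) : omg p t = ZMod.stdAddChar t := by
  rw [ZMod.stdAddChar_apply, ZMod.toCircle_apply, omg]

theorem norm_avgC_le_rpow {α : Type*} [Fintype α] (f : α → ℂ) {p : ℝ} (hp : 0 < p) {n d : ℕ}
    (hcard : (Fintype.card α : ℝ) = p ^ n) (hdn : d ≤ n)
    (hsum : ‖∑ x, f x‖ ^ 2 ≤ p ^ n * p ^ d) :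
    ‖avgC f‖ ≤ p ^ (-((n - d : ℕ) : ℝ) / 2) := by
  have hpow : (p ^ (-((n - d : ℕ) : ℝ) / 2)) ^ 2 = p ^ d / p ^ n := by
    rw [← Real.rpow_mul_natCast hp.le, Nat.cast_sub hdn, ← Real.rpow_natCast, ← Real.rpow_natCast,
      ← Real.rpow_sub hp]
    congr 1
    push_cast
    ring
  rw [← pow_le_pow_iff_left₀ (norm_nonneg _) (by positivity) two_ne_zero, hpow, avgC, norm_div,
    div_pow, Complex.norm_natCast, hcard]
  calc ‖∑ x, f x‖ ^ 2 / (p ^ n) ^ 2 ≤ p ^ n * p ^ d / (p ^ n) ^ 2 := by gcongr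
    _ = p ^ d / p ^ n := by field_simp

section QuadraticForm

variable {p n : ℕ} {q : Vec p n → ZMod p}

theorem qbeta_comm (q : Vec p n → ZMod p) (u v : Vec p n) : qbeta q u v = qbeta q v u := by
  simp only [qbeta, add_comm u v]
  ring

def IsQuadFormOn.qbetaLeft (hq : IsQuadFormOn ⊤ q) (h : Vec p n) : Vec p n →+ ZMod p :=
  AddMonoidHom.mk' (qbeta q · h) fun u v => by
    simp only [qbeta_comm _ _ h]
    exact hq.2 h trivial u trivial v trivial

theorem card_qbeta_eq_zero_le [Fact p.Prime]
    [DecidablePred fun h : Vec p n => ∀ u, qbeta q u h = 0] :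
    #{h : Vec p n | ∀ u, qbeta q u h = 0} ≤ p ^ Module.finrank (ZMod p) (qRadical ⊤ q) := by
  classical
  calc #{h : Vec p n | ∀ u, qbeta q u h = 0}
      ≤ #((qRadical ⊤ q : Set (Vec p n)).toFinset) := by
        refine card_le_card fun h hh => ?_
        rw [Set.mem_toFinset]
        exact Submodule.subset_span ⟨trivial, fun u _ => (mem_filter.mp hh).2 u⟩
    _ = p ^ Module.finrank (ZMod p) (qRadical ⊤ q) := by
        simp only [Set.toFinset_card, SetLike.coe_sort_coe]
        rw [Module.card_eq_pow_finrank (K := ZMod p), ZMod.card]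

end QuadraticForm

/-- Lemma 3.3, Gauss sums. If `q` is a quadratic form of rank `r` on
`𝔽_p^n` and `φ` is linear, then `|𝔼_x ω^{q(x)+φ(x)}| ≤ p^{-r/2}`. -/
theorem stmt5 (p : ℕ) [Fact p.Prime] (n : ℕ) (q : Vec p n → ZMod p) (r : ℕ)
    (hq : IsQuadFormOn (⊤ : Submodule (ZMod p) (Vec p n)) q)
    (hr : qRank (⊤ : Submodule (ZMod p) (Vec p n)) q = r)
    (φ : Vec p n →ₗ[ZMod p] ZMod p) :
    ‖avgC (fun x => omg p (q x + φ x))‖ ≤ (p : ℝ) ^ (-(r : ℝ) / 2) := by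
  classical
  have hcard : Fintype.card (Vec p n) = p ^ n := by simp
  have hpolar : ∀ y h : Vec p n,
      q (y + h) + φ (y + h) = (q y + φ y) + (q h + φ h) + hq.qbetaLeft h y := fun y h => by
    simp only [IsQuadFormOn.qbetaLeft, AddMonoidHom.mk'_apply, qbeta, map_add]
    ring
  have hsum : ‖∑ x, omg p (q x + φ x)‖ ^ 2
      ≤ (p : ℝ) ^ n * (p : ℝ) ^ Module.finrank (ZMod p) (qRadical ⊤ q) := by
    simp_rw [omg_eq_stdAddChar]
    refine (AddChar.norm_sum_sq_le_card_mul_card_radical _ ZMod.injective_stdAddChar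
      hpolar).trans ?_
    simp only [DFunLike.ext_iff, IsQuadFormOn.qbetaLeft, AddMonoidHom.mk'_apply,
      AddMonoidHom.zero_apply, hcard]
    exact_mod_cast Nat.mul_le_mul_left _ card_qbeta_eq_zero_le
  rw [← hr, qRank, finrank_top, Module.finrank_fin_fun]
  exact norm_avgC_le_rpow _ (by exact_mod_cast (Fact.out : p.Prime).pos)
    (by exact_mod_cast hcard) (Submodule.finrank_le _ |>.trans_eq (Module.finrank_fin_fun _)) hsum
end

section
/- Let u_1,…,u_n be vectors of norm at most 1 in a complex Hilbert space H, let λ_1,…,λ_n be scalars with Σ_{i=1}^n |λ_i| ≤ C, and let δ > 0. Then there exist indices i_1,…,i_k with k ≤ C²/δ² and a set A ⊆ {1,…,n} with the following properties: for every i ∉ A there exists j ≤ k with |⟨u_i, u_{i_j}⟩| ≥ δ²/(2C²), and ‖Σ_{i∈A} λ_i u_i‖ ≤ δ. -/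
/-!
Draw `k = ⌊C²/δ²⌋` indices independently, `x` with probability `|λₓ| / M` where `M = ∑ |λᵢ|`,
and let `A` be the set of `i` with `|⟨uᵢ, u_{t j}⟩| < θ = δ²/(2C²)` for every sampled `t j`.
Expanding the square, `‖∑_{i∈A} λᵢuᵢ‖² ≤ ∑_{i∈A} |λᵢ| ∑ₓ |λₓ| |⟨uᵢ, uₓ⟩|`, and the inner sum is at
most `M (qᵢ + θ)`, where `qᵢ` is the probability of drawing an `x` with `|⟨uᵢ, uₓ⟩| ≥ θ`. As
`i ∈ A` with probability `(1 - qᵢ)^k`, the expected square is at most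
`M² (θ + max_q q (1 - q)^k) ≤ M² (θ + 1/(2(k+1))) ≤ δ²`, so some sample does at least as well.
The maximum is `k^k/(k+1)^(k+1)`, and `(1 + 1/k)^k ≥ 2` by Bernoulli's inequality.
-/

open Finset

theorem sum_prod_mul_sum_filter_forall {ι α R : Type*} [Fintype ι] [Fintype α] [CommSemiring R]
    (k : ℕ) (p : α → R) (r : ι → α → Prop) [∀ i x, Decidable (r i x)] (f : ι → R) :
    ∑ t : Fin k → α, (∏ j, p (t j)) * ∑ i with ∀ j, r i (t j), f i =
      ∑ i, f i * (∑ x with r i x, p x) ^ k := by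
  have hpow (i : ι) : (∑ x with r i x, p x) ^ k = ∑ t : Fin k → α with ∀ j, r i (t j),
      ∏ j, p (t j) := by
    rw [sum_pow']
    exact sum_congr (by ext t; simp) fun _ _ => rfl
  simp_rw [hpow, mul_sum, sum_filter]
  rw [sum_comm]
  simp_rw [mul_comm]

theorem exists_le_of_sum_mul_le {α : Type*} [Fintype α] {w g : α → ℝ} (hw : ∀ a, 0 ≤ w a)
    (hw1 : ∑ a, w a = 1) {B : ℝ} (h : ∑ a, w a * g a ≤ B) : ∃ a, g a ≤ B := by
  by_contra! hlt
  obtain ⟨a, -, ha⟩ := exists_ne_zero_of_sum_ne_zero (hw1 ▸ one_ne_zero)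
  have : ∑ a, w a * B < ∑ a, w a * g a :=
    sum_lt_sum (fun a _ => mul_le_mul_of_nonneg_left (hlt a).le (hw a))
      ⟨a, mem_univ _, mul_lt_mul_of_pos_left (hlt a) ((hw a).lt_of_ne' ha)⟩
  rw [← sum_mul, hw1, one_mul] at this
  linarith

theorem one_sub_mul_pow_le {x : ℝ} (hx0 : 0 ≤ x) (hx1 : x ≤ 1) {k : ℕ} (hk : 0 < k) :
    (1 - x) * x ^ k ≤ k ^ k / (k + 1) ^ (k + 1) := by
  rcases hx0.eq_or_lt with rfl | hx
  · rw [zero_pow hk.ne', mul_zero]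
    positivity
  have hk' : (0 : ℝ) < k := by exact_mod_cast hk
  -- Bernoulli at `k / ((k + 1) x)`, which is `1` exactly at the maximiser `x = k / (k + 1)`
  have key := one_add_mul_le_pow (a := k / ((k + 1) * x) - 1) (by
    have : 0 ≤ k / ((k + 1) * x) := by positivity
    linarith) (k + 1)
  rw [add_sub_cancel, div_pow, mul_pow] at key
  push_cast at key
  field_simp at key
  rw [le_div_iff₀ (by positivity)]
  refine le_of_mul_le_mul_left ?_ (mul_pos hx hk')
  calc x * k * ((1 - x) * x ^ k * (k + 1) ^ (k + 1))
      = (x + (k - (k + 1) * x)) * (k + 1) ^ (k + 1) * x ^ (k + 1) := by ring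
    _ ≤ x * k ^ (k + 1) := key
    _ = x * k * k ^ k := by ring

theorem two_mul_pow_le_add_one_pow {k : ℕ} (hk : 0 < k) : 2 * (k : ℝ) ^ k ≤ (k + 1) ^ k := by
  have hk' : (0 : ℝ) < k := by exact_mod_cast hk
  have key := one_add_mul_le_pow (a := 1 / (k : ℝ)) (by linarith [one_div_pos.2 hk']) k
  rw [mul_one_div_cancel hk'.ne', one_add_div hk'.ne', div_pow, le_div_iff₀ (by positivity)] at key
  linarith

theorem one_sub_mul_pow_le_one_div {x : ℝ} (hx0 : 0 ≤ x) (hx1 : x ≤ 1) {k : ℕ} (hk : 0 < k) :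
    (1 - x) * x ^ k ≤ 1 / (2 * (k + 1)) := by
  refine (one_sub_mul_pow_le hx0 hx1 hk).trans ?_
  rw [div_le_div_iff₀ (by positivity) (by positivity), pow_succ]
  nlinarith [two_mul_pow_le_add_one_pow hk]

theorem norm_sum_smul_le_sum_norm {ι 𝕜 E : Type*} [NormedField 𝕜] [SeminormedAddCommGroup E]
    [NormedSpace 𝕜 E] (s : Finset ι) (c : ι → 𝕜) {u : ι → E} (hu : ∀ i, ‖u i‖ ≤ 1) :
    ‖∑ i ∈ s, c i • u i‖ ≤ ∑ i ∈ s, ‖c i‖ :=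
  (norm_sum_le _ _).trans <| sum_le_sum fun i _ => by
    rw [norm_smul]
    exact mul_le_of_le_one_right (norm_nonneg _) (hu i)

section InnerProductSpace

variable {𝕜 E ι : Type*} [RCLike 𝕜] [NormedAddCommGroup E] [InnerProductSpace 𝕜 E]

theorem norm_sum_smul_sq_le (s : Finset ι) (c : ι → 𝕜) (u : ι → E) :
    ‖∑ i ∈ s, c i • u i‖ ^ 2 ≤ ∑ i ∈ s, ∑ j ∈ s, ‖c i‖ * (‖c j‖ * ‖inner 𝕜 (u i) (u j)‖) := by
  calc ‖∑ i ∈ s, c i • u i‖ ^ 2 = ‖inner 𝕜 (∑ i ∈ s, c i • u i) (∑ j ∈ s, c j • u j)‖ := by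
        rw [← inner_self_re_eq_norm, inner_self_eq_norm_sq]
    _ = ‖∑ i ∈ s, ∑ j ∈ s, inner 𝕜 (c i • u i) (c j • u j)‖ := by
        simp_rw [sum_inner, inner_sum]
    _ ≤ ∑ i ∈ s, ∑ j ∈ s, ‖inner 𝕜 (c i • u i) (c j • u j)‖ :=
        (norm_sum_le _ _).trans (sum_le_sum fun i _ => norm_sum_le _ _)
    _ = _ := by
        simp_rw [inner_smul_left, inner_smul_right, norm_mul, RCLike.norm_conj]

variable [Fintype ι]

theorem sum_norm_mul_norm_inner_le (u : ι → E) (hu : ∀ i, ‖u i‖ ≤ 1) (c : ι → 𝕜) (θ : ℝ)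
    (i : ι) :
    ∑ x, ‖c x‖ * ‖inner 𝕜 (u i) (u x)‖ ≤
      θ * ∑ x with ‖inner 𝕜 (u i) (u x)‖ < θ, ‖c x‖ +
        ∑ x with ¬‖inner 𝕜 (u i) (u x)‖ < θ, ‖c x‖ := by
  rw [mul_sum, sum_filter, sum_filter, ← sum_add_distrib]
  refine sum_le_sum fun x _ => ?_
  split_ifs with h
  · rw [add_zero, mul_comm]
    exact mul_le_mul_of_nonneg_right h.le (norm_nonneg _)
  · rw [zero_add]
    refine mul_le_of_le_one_right (norm_nonneg _) ?_
    exact (norm_inner_le_norm _ _).trans (mul_le_one₀ (hu i) (norm_nonneg _) (hu x))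

theorem sum_norm_mul_norm_inner_mul_pow_le (u : ι → E) (hu : ∀ i, ‖u i‖ ≤ 1) (c : ι → 𝕜)
    (hc : 0 < ∑ i, ‖c i‖) {θ : ℝ} (hθ : 0 ≤ θ) {k : ℕ} (hk : 0 < k) (i : ι) :
    (∑ x, ‖c x‖ * ‖inner 𝕜 (u i) (u x)‖) *
        (∑ x with ‖inner 𝕜 (u i) (u x)‖ < θ, ‖c x‖ / ∑ y, ‖c y‖) ^ k ≤
      (∑ x, ‖c x‖) * (θ + 1 / (2 * (k + 1))) := by
  set M := ∑ x, ‖c x‖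
  set P := ∑ x with ‖inner 𝕜 (u i) (u x)‖ < θ, ‖c x‖ / M
  have hP0 : 0 ≤ P := sum_nonneg fun x _ => by positivity
  have hP1 : P ≤ 1 := by
    rw [← div_self hc.ne', sum_div]
    exact sum_le_sum_of_subset_of_nonneg (subset_univ _) fun x _ _ => by positivity
  have hnear : ∑ x with ‖inner 𝕜 (u i) (u x)‖ < θ, ‖c x‖ = M * P := by
    rw [← mul_div_cancel₀ (∑ x with ‖inner 𝕜 (u i) (u x)‖ < θ, ‖c x‖) hc.ne', sum_div]
  have hfar : ∑ x with ¬‖inner 𝕜 (u i) (u x)‖ < θ, ‖c x‖ = M * (1 - P) := by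
    have hsplit : _ + _ = M :=
      sum_filter_add_sum_filter_not univ (fun x => ‖inner 𝕜 (u i) (u x)‖ < θ) (‖c ·‖)
    rw [mul_one_sub, ← hnear, ← hsplit, add_sub_cancel_left]
  calc (∑ x, ‖c x‖ * ‖inner 𝕜 (u i) (u x)‖) * P ^ k ≤ (θ * (M * P) + M * (1 - P)) * P ^ k := by
        refine mul_le_mul_of_nonneg_right ?_ (pow_nonneg hP0 k)
        rw [← hnear, ← hfar]
        exact sum_norm_mul_norm_inner_le u hu c θ i
    _ = M * (θ * P ^ (k + 1) + (1 - P) * P ^ k) := by ring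
    _ ≤ M * (θ + 1 / (2 * (k + 1))) := by
        gcongr
        · exact mul_le_of_le_one_right hθ (pow_le_one₀ hP0 hP1)
        · exact one_sub_mul_pow_le_one_div hP0 hP1 hk

theorem exists_tuple_norm_sum_uncovered_sq_le (u : ι → E) (hu : ∀ i, ‖u i‖ ≤ 1) (c : ι → 𝕜)
    (hc : 0 < ∑ i, ‖c i‖) {θ : ℝ} (hθ : 0 ≤ θ) {k : ℕ} (hk : 0 < k) :
    ∃ t : Fin k → ι, ‖∑ i with ∀ j, ‖inner 𝕜 (u i) (u (t j))‖ < θ, c i • u i‖ ^ 2 ≤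
      (∑ i, ‖c i‖) ^ 2 * (θ + 1 / (2 * (k + 1))) := by
  set M := ∑ i, ‖c i‖
  set p : ι → ℝ := fun x => ‖c x‖ / M
  set f : ι → ℝ := fun i => ‖c i‖ * ∑ x, ‖c x‖ * ‖inner 𝕜 (u i) (u x)‖
  have hW (t : Fin k → ι) : 0 ≤ ∏ j, p (t j) := prod_nonneg fun j _ => by positivity
  have hW1 : ∑ t : Fin k → ι, ∏ j, p (t j) = 1 := by
    rw [← Fintype.sum_pow, ← sum_div, div_self hc.ne', one_pow]
  have hnorm (s : Finset ι) : ‖∑ i ∈ s, c i • u i‖ ^ 2 ≤ ∑ i ∈ s, f i :=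
    (norm_sum_smul_sq_le s c u).trans <| sum_le_sum fun i _ => by
      rw [← mul_sum]
      exact mul_le_mul_of_nonneg_left (sum_le_sum_of_subset_of_nonneg (subset_univ s)
        fun x _ _ => by positivity) (norm_nonneg _)
  refine exists_le_of_sum_mul_le hW hW1 ?_
  calc _ ≤ ∑ t : Fin k → ι, (∏ j, p (t j)) * ∑ i with ∀ j, ‖inner 𝕜 (u i) (u (t j))‖ < θ, f i :=
        sum_le_sum fun t _ => mul_le_mul_of_nonneg_left (hnorm _) (hW t)
    _ = ∑ i, f i * (∑ x with ‖inner 𝕜 (u i) (u x)‖ < θ, p x) ^ k :=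
        sum_prod_mul_sum_filter_forall k p (fun i x => ‖inner 𝕜 (u i) (u x)‖ < θ) f
    _ ≤ ∑ i, ‖c i‖ * (M * (θ + 1 / (2 * (k + 1)))) := sum_le_sum fun i _ => by
        rw [mul_assoc]
        exact mul_le_mul_of_nonneg_left
          (sum_norm_mul_norm_inner_mul_pow_le u hu c hc hθ hk i) (norm_nonneg _)
    _ = M ^ 2 * (θ + 1 / (2 * (k + 1))) := by rw [← sum_mul]; ring

end InnerProductSpace

/-- Corollary 4.2. Given vectors `u₁,…,u_n` of norm at most 1 in a
complex Hilbert space and scalars with `∑|λᵢ| ≤ C`, there are at most `C²/δ²` indices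
`i₁,…,i_k` and a set `A` such that every `i ∉ A` has `|⟨uᵢ, u_{iⱼ}⟩| ≥ δ²/2C²` for some
`j`, and `‖∑_{i∈A} λᵢuᵢ‖ ≤ δ`. -/
theorem stmt11 {H : Type*} [NormedAddCommGroup H] [InnerProductSpace ℂ H]
    (n : ℕ) (u : Fin n → H) (hu : ∀ i, ‖u i‖ ≤ 1)
    (lam : Fin n → ℂ) (C : ℝ) (hC : (∑ i, ‖lam i‖) ≤ C)
    (δ : ℝ) (hδ : 0 < δ) :
    ∃ (k : ℕ) (idx : Fin k → Fin n) (A : Finset (Fin n)),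
      (k : ℝ) ≤ C ^ 2 / δ ^ 2 ∧
      (∀ i ∉ A, ∃ j : Fin k, δ ^ 2 / (2 * C ^ 2) ≤ ‖(inner ℂ (u i) (u (idx j)) : ℂ)‖) ∧
      ‖∑ i ∈ A, lam i • u i‖ ≤ δ := by
  by_cases hsmall : ∑ i, ‖lam i‖ ≤ δ
  · exact ⟨0, Fin.elim0, univ, by rw [Nat.cast_zero]; positivity,
      fun i hi => absurd (mem_univ i) hi, (norm_sum_smul_le_sum_norm univ lam hu).trans hsmall⟩
  have hM : δ < ∑ i, ‖lam i‖ := not_le.1 hsmall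
  have hδC : δ < C := hM.trans_le hC
  have hC0 : 0 < C := hδ.trans hδC
  set k := ⌊C ^ 2 / δ ^ 2⌋₊
  have hk : 0 < k := Nat.floor_pos.2 <| (one_le_div (by positivity)).2 (by nlinarith)
  have hkθ : 1 / (2 * (k + 1)) ≤ δ ^ 2 / (2 * C ^ 2) := by
    have := (div_le_iff₀ (by positivity)).1 (Nat.lt_floor_add_one (C ^ 2 / δ ^ 2)).le
    rw [div_le_div_iff₀ (by positivity) (by positivity)]
    nlinarith
  obtain ⟨t, ht⟩ := exists_tuple_norm_sum_uncovered_sq_le u hu lam (hδ.trans hM)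
    (θ := δ ^ 2 / (2 * C ^ 2)) (by positivity) hk
  refine ⟨k, t, univ.filter fun i => ∀ j, ‖inner ℂ (u i) (u (t j))‖ < δ ^ 2 / (2 * C ^ 2),
    Nat.floor_le (by positivity), fun i hi => ?_, ?_⟩
  · simpa using hi
  · refine (pow_le_pow_iff_left₀ (norm_nonneg _) hδ.le two_ne_zero).1 (ht.trans ?_)
    calc (∑ i, ‖lam i‖) ^ 2 * (δ ^ 2 / (2 * C ^ 2) + 1 / (2 * (k + 1)))
        ≤ C ^ 2 * (δ ^ 2 / (2 * C ^ 2) + δ ^ 2 / (2 * C ^ 2)) := by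
          gcongr
      _ = δ ^ 2 := by field_simp; norm_num
end

section
/- Let p be a prime, let δ > 0 and T > 0 be constants, let f : 𝔽_p^n → ℂ, and suppose that ‖f‖_{U^2}^* ≤ T. Then there is a linear subspace V of 𝔽_p^n of codimension at most δ^{−4}T^4 such that ‖f − f*μ_V‖_2 ≤ δ. -/
open scoped BigOperators

/-!
Expand in the characters `x ↦ ω^{ξ·x}` of `𝔽_p^n`. By Parseval and the identity
`‖g‖_{U²} = ‖ĝ‖_{ℓ⁴}`, the hypothesis says `|∑_ξ c(ξ) conj f̂(ξ)| ≤ T ‖c‖_{ℓ⁴}` for every `c`.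
Let `S` be the set of frequencies with `|f̂(ξ)| ≥ δ³/T²` and `V = S^⊥`, so `codim V ≤ |S|`.
Testing `c` = the phases of `f̂` on `S` gives `(δ³/T²)|S| ≤ T|S|^{1/4}`, i.e. `|S| ≤ δ⁻⁴T⁴`.
The function `h = f - f*μ_V` has `ĥ = f̂ · 1_{ξ ∉ V^⊥}`, so `|ĥ| < δ³/T²` and
`‖h‖₂² = ∑ ĥ conj f̂`; testing `c = ĥ` gives `‖h‖₂⁸ ≤ T⁴ ∑|ĥ|⁴ ≤ δ⁶ ‖h‖₂²`, i.e. `‖h‖₂ ≤ δ`.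
-/

open Finset

lemma avgC_eq_expect {α : Type*} [Fintype α] (f : α → ℂ) : avgC f = 𝔼 x, f x :=
  (Fintype.expect_eq_sum_div_card f).symm

lemma star_expect {ι K : Type*} [Field K] [CharZero K] [StarRing K] (s : Finset ι)
    (f : ι → K) :
    star (𝔼 i ∈ s, f i) = 𝔼 i ∈ s, star (f i) := by
  simp [Finset.expect_eq_sum_div_card, star_sum]

lemma mul_star_eq_norm_sq (z : ℂ) : z * star z = ((‖z‖ ^ 2 : ℝ) : ℂ) := by
  push_cast
  exact Complex.mul_conj' z

lemma rpow_quarter_pow_four {x : ℝ} (hx : 0 ≤ x) : (x ^ (1 / 4 : ℝ)) ^ 4 = x := by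
  simpa using Real.rpow_inv_natCast_pow hx (n := 4) four_ne_zero

lemma pow_four_rpow_quarter {x : ℝ} (hx : 0 ≤ x) : (x ^ 4) ^ (1 / 4 : ℝ) = x := by
  simpa using Real.pow_rpow_inv_natCast hx (n := 4) four_ne_zero

lemma pow_three_le_of_pow_four_le_mul {x c : ℝ} (hx : 0 ≤ x) (hc : 0 ≤ c)
    (h : x ^ 4 ≤ c * x) : x ^ 3 ≤ c := by
  rcases hx.eq_or_lt with rfl | hx
  · simpa using hc
  · exact le_of_mul_le_mul_right (by linarith) hx

lemma Matrix.codim_ker_mulVecLin_le {K m ι : Type*} [Field K] [Fintype m] [Fintype ι]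
    (A : Matrix m ι K) :
    Fintype.card ι - Module.finrank K (LinearMap.ker A.mulVecLin) ≤ Fintype.card m := by
  have hrank := A.rank_le_card_height
  have := LinearMap.finrank_range_add_finrank_ker A.mulVecLin
  rw [Module.finrank_fintype_fun_eq_card] at this
  rw [Matrix.rank] at hrank
  omega

namespace Vec

variable {p n : ℕ} [NeZero p]

noncomputable def character (ξ : Vec p n) : AddChar (Vec p n) ℂ where
  toFun x := ZMod.stdAddChar (ξ ⬝ᵥ x)
  map_zero_eq_one' := by simp
  map_add_eq_mul' x y := by simp [dotProduct_add, AddChar.map_add_eq_mul]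

lemma character_apply (ξ x : Vec p n) : character ξ x = ZMod.stdAddChar (ξ ⬝ᵥ x) := rfl

lemma character_comm (ξ x : Vec p n) : character ξ x = character x ξ := by
  rw [character_apply, character_apply, dotProduct_comm]

lemma character_eq_one_iff {ξ x : Vec p n} : character ξ x = 1 ↔ ξ ⬝ᵥ x = 0 := by
  rw [character_apply, ← AddChar.map_zero_eq_one (ZMod.stdAddChar (N := p)),
    ZMod.injective_stdAddChar.eq_iff]

lemma character_eq_zero_iff {ξ : Vec p n} : character ξ = 0 ↔ ξ = 0 := by
  classical
  refine ⟨fun h => funext fun i => ?_, fun h => ?_⟩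
  · have := AddChar.eq_zero_iff.mp h (Pi.single i 1)
    simpa [character_eq_one_iff] using this
  · ext x; simp [h, character_apply]

lemma star_character (ξ x : Vec p n) : star (character ξ x) = character ξ (-x) :=
  (AddChar.map_neg_eq_conj _ _).symm

lemma mul_star_character (ξ η x : Vec p n) :
    character ξ x * star (character η x) = character (ξ - η) x := by
  rw [star_character, character_apply, character_apply, character_apply,
    ← AddChar.map_add_eq_mul, dotProduct_neg, sub_dotProduct, sub_eq_add_neg]

lemma character_mul_star (ξ x y : Vec p n) :
    character ξ x * star (character ξ y) = character ξ (x - y) := by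
  simp_rw [character_comm ξ, mul_star_character]

lemma expect_character (ξ : Vec p n) : 𝔼 x, character ξ x = if ξ = 0 then 1 else 0 := by
  classical
  simp_rw [AddChar.expect_eq_ite, character_eq_zero_iff]

lemma sum_character_apply (x : Vec p n) :
    ∑ ξ, character ξ x = if x = 0 then (Fintype.card (Vec p n) : ℂ) else 0 := by
  simp_rw [character_comm _ x, AddChar.sum_eq_ite, character_eq_zero_iff]

noncomputable def dft (f : Vec p n → ℂ) (ξ : Vec p n) : ℂ :=
  𝔼 x, f x * star (character ξ x)

noncomputable def idft (c : Vec p n → ℂ) (x : Vec p n) : ℂ := ∑ ξ, c ξ * character ξ x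

lemma dft_idft (c : Vec p n → ℂ) : dft (idft c) = c := by
  ext η
  simp_rw [dft, idft, sum_mul, mul_assoc, mul_star_character, expect_sum_comm,
    ← mul_expect, expect_character, sub_eq_zero, mul_ite, mul_one, mul_zero, sum_ite_eq',
    mem_univ, if_true]

lemma idft_dft (f : Vec p n → ℂ) : idft (dft f) = f := by
  ext x
  calc idft (dft f) x = 𝔼 y, f y * ∑ ξ, character ξ (x - y) := by
        simp_rw [idft, dft, expect_mul, ← expect_sum_comm, mul_sum, mul_assoc,
          mul_comm (star _), character_mul_star]
    _ = f x := by
        have hN : (Fintype.card (Vec p n) : ℂ) ≠ 0 := Nat.cast_ne_zero.mpr Fintype.card_ne_zero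
        simp_rw [sum_character_apply, sub_eq_zero, mul_ite, mul_zero]
        rw [Fintype.expect_ite_eq, NNRat.smul_def]
        push_cast
        field_simp

lemma inprod_eq_sum_dft (g h : Vec p n → ℂ) :
    inprod g h = ∑ ξ, dft g ξ * star (dft h ξ) := by
  conv_lhs => rw [← idft_dft g]
  simp_rw [inprod, avgC_eq_expect, idft, sum_mul, expect_sum_comm, mul_assoc,
    ← mul_expect, dft, star_expect, star_mul, star_star]

lemma dft_translate (f : Vec p n → ℂ) (a ξ : Vec p n) :
    dft (fun x => f (x + a)) ξ = character ξ a * dft f ξ := by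
  have shift : ∀ x, star (character ξ x) = character ξ a * star (character ξ (x + a)) := by
    intro x
    rw [character_mul_star, star_character]
    congr 1
    abel
  calc dft (fun x => f (x + a)) ξ
      = 𝔼 x, character ξ a * (f (x + a) * star (character ξ (x + a))) :=
        expect_congr rfl fun x _ => by rw [shift x]; ring
    _ = character ξ a * dft f ξ := by
        rw [← mul_expect]
        congr 1
        exact Fintype.expect_equiv (Equiv.addRight a) _ _ fun x => rfl

noncomputable def autocorr (f : Vec p n → ℂ) (a : Vec p n) : ℂ :=
  𝔼 x, f (x + a) * star (f x)

lemma dft_autocorr (f : Vec p n → ℂ) (ξ : Vec p n) :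
    dft (autocorr f) ξ = dft f ξ * star (dft f ξ) := by
  calc dft (autocorr f) ξ = 𝔼 x, star (f x) * dft (fun a => f (a + x)) ξ := by
        simp_rw [dft, autocorr, expect_mul, mul_expect]
        rw [expect_comm]
        exact expect_congr rfl fun x _ => expect_congr rfl fun a _ => by rw [add_comm]; ring
    _ = dft f ξ * 𝔼 x, character ξ x * star (f x) := by
        simp_rw [dft_translate, mul_expect]
        exact expect_congr rfl fun x _ => by ring
    _ = _ := by simp_rw [dft, star_expect, star_mul, star_star]

lemma avgC_U2_integrand (f : Vec p n → ℂ) :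
    avgC (fun t : Vec p n × Vec p n × Vec p n =>
      f t.1 * star (f (t.1 + t.2.1)) * star (f (t.1 + t.2.2)) * f (t.1 + t.2.1 + t.2.2)) =
      inprod (autocorr f) (autocorr f) := by
  calc _ = 𝔼 x, 𝔼 a, 𝔼 b, f x * star (f (x + a)) * star (f (x + b)) * f (x + a + b) := by
        simp_rw [avgC_eq_expect, ← univ_product_univ, expect_product]
    _ = 𝔼 x, 𝔼 a, 𝔼 y, f x * star (f (x + a)) * star (f y) * f (y + a) := by
        refine expect_congr rfl fun x _ => expect_congr rfl fun a _ => ?_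
        exact Fintype.expect_equiv (Equiv.addLeft x) _ _ fun b => by
          simp [add_right_comm]
    _ = 𝔼 a, 𝔼 y, 𝔼 x, f (y + a) * star (f y) * star (f (x + a) * star (f x)) := by
        rw [expect_comm]
        refine expect_congr rfl fun a _ => ?_
        rw [expect_comm]
        refine expect_congr rfl fun y _ => expect_congr rfl fun x _ => ?_
        rw [star_mul, star_star]
        ring
    _ = _ := by
        simp_rw [inprod, avgC_eq_expect, autocorr, star_expect, expect_mul, mul_expect]

lemma U2_eq (f : Vec p n → ℂ) : U2 f = (∑ ξ, ‖dft f ξ‖ ^ 4) ^ (1 / 4 : ℝ) := by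
  rw [U2, avgC_U2_integrand, inprod_eq_sum_dft]
  simp_rw [dft_autocorr, mul_star_eq_norm_sq, Complex.norm_real, norm_pow, norm_norm,
    ← pow_mul]
  rw [← Complex.ofReal_sum, Complex.norm_real, Real.norm_of_nonneg (by positivity)]

lemma U2_nonneg (g : Vec p n → ℂ) : 0 ≤ U2 g := Real.rpow_nonneg (norm_nonneg _) _

lemma norm_dft_le_U2 (g : Vec p n → ℂ) (ξ : Vec p n) : ‖dft g ξ‖ ≤ U2 g := by
  rw [U2_eq, ← pow_four_rpow_quarter (norm_nonneg (dft g ξ))]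
  gcongr
  exact single_le_sum (f := fun η => ‖dft g η‖ ^ 4) (fun _ _ => by positivity) (mem_univ ξ)

lemma dft_const_mul (a : ℂ) (g : Vec p n → ℂ) (ξ : Vec p n) :
    dft (fun x => a * g x) ξ = a * dft g ξ := by
  simp_rw [dft, mul_expect, mul_assoc]

lemma U2_const_mul (a : ℂ) (g : Vec p n → ℂ) : U2 (fun x => a * g x) = ‖a‖ * U2 g := by
  simp_rw [U2_eq, dft_const_mul, norm_mul, mul_pow, ← mul_sum]
  rw [Real.mul_rpow (by positivity) (by positivity), pow_four_rpow_quarter (norm_nonneg a)]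

lemma inprod_const_mul_left (a : ℂ) (g f : Vec p n → ℂ) :
    inprod (fun x => a * g x) f = a * inprod g f := by
  simp_rw [inprod, avgC_eq_expect, mul_expect, mul_assoc]

lemma bddAbove_U2dual (f : Vec p n → ℂ) :
    BddAbove {r : ℝ | ∃ g : Vec p n → ℂ, U2 g ≤ 1 ∧ r = ‖inprod g f‖} := by
  refine ⟨∑ ξ, ‖dft f ξ‖, ?_⟩
  rintro r ⟨g, hg, rfl⟩
  rw [inprod_eq_sum_dft]
  refine (norm_sum_le _ _).trans (sum_le_sum fun ξ _ => ?_)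
  rw [norm_mul, norm_star]
  exact mul_le_of_le_one_left (norm_nonneg _) ((norm_dft_le_U2 g ξ).trans hg)

lemma norm_inprod_le_of_U2dual_le {f : Vec p n → ℂ} {T : ℝ} (hf : U2dual f ≤ T)
    (g : Vec p n → ℂ) : ‖inprod g f‖ ≤ T * U2 g := by
  rcases (U2_nonneg g).eq_or_lt with h0 | hpos
  · have hg : ∀ ξ, dft g ξ = 0 := fun ξ =>
      norm_le_zero_iff.mp (h0 ▸ norm_dft_le_U2 g ξ)
    simp [inprod_eq_sum_dft, hg, ← h0]
  · set g' := fun x => ((U2 g)⁻¹ : ℂ) * g x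
    have hg' : U2 g' = 1 := by
      rw [U2_const_mul, norm_inv, Complex.norm_real, Real.norm_of_nonneg hpos.le,
        inv_mul_cancel₀ hpos.ne']
    have h := (le_csSup (bddAbove_U2dual f) ⟨g', hg'.le, rfl⟩).trans hf
    rw [inprod_const_mul_left, norm_mul, norm_inv, Complex.norm_real,
      Real.norm_of_nonneg hpos.le, inv_mul_le_iff₀ hpos] at h
    linarith

lemma norm_sum_mul_star_dft_pow_four_le {f : Vec p n → ℂ} {T : ℝ} (hf : U2dual f ≤ T)
    (c : Vec p n → ℂ) :
    ‖∑ ξ, c ξ * star (dft f ξ)‖ ^ 4 ≤ T ^ 4 * ∑ ξ, ‖c ξ‖ ^ 4 := by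
  have h := norm_inprod_le_of_U2dual_le hf (idft c)
  rw [inprod_eq_sum_dft, dft_idft, U2_eq, dft_idft] at h
  calc _ ≤ (T * (∑ ξ, ‖c ξ‖ ^ 4) ^ (1 / 4 : ℝ)) ^ 4 := by gcongr
    _ = _ := by rw [mul_pow, rpow_quarter_pow_four (by positivity)]

lemma sum_norm_dft_pow_four_le {f : Vec p n → ℂ} {T : ℝ} (hf : U2dual f ≤ T)
    (S : Finset (Vec p n)) : (∑ ξ ∈ S, ‖dft f ξ‖) ^ 4 ≤ T ^ 4 * #S := by
  set c : Vec p n → ℂ := fun ξ => if ξ ∈ S then dft f ξ / ‖dft f ξ‖ else 0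
  have hphase :
      ∀ ξ, c ξ * star (dft f ξ) = if ξ ∈ S then (‖dft f ξ‖ : ℂ) else 0 := by
    intro ξ
    split_ifs with hξ
    · simp only [c, if_pos hξ]
      rw [div_mul_eq_mul_div, mul_star_eq_norm_sq]
      push_cast
      rcases eq_or_ne (‖dft f ξ‖ : ℂ) 0 with h | h
      · simp [h]
      · field_simp
    · simp [c, hξ]
  have hunit : ∀ ξ, ‖c ξ‖ ^ 4 ≤ if ξ ∈ S then 1 else 0 := by
    intro ξ
    split_ifs with hξ
    · simp only [c, if_pos hξ, norm_div, Complex.norm_real, norm_norm]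
      exact pow_le_one₀ (by positivity) (div_self_le_one _)
    · simp [c, hξ]
  have h := norm_sum_mul_star_dft_pow_four_le hf c
  simp_rw [hphase, sum_ite_mem, univ_inter, ← Complex.ofReal_sum, Complex.norm_real,
    Real.norm_of_nonneg (sum_nonneg fun _ _ => norm_nonneg _)] at h
  refine h.trans (mul_le_mul_of_nonneg_left ?_ (by positivity))
  refine (sum_le_sum fun ξ _ => hunit ξ).trans ?_
  simp [sum_ite_mem]

lemma L2_sq (g : Vec p n → ℂ) : L2 g ^ 2 = ∑ ξ, ‖dft g ξ‖ ^ 2 := by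
  have h := inprod_eq_sum_dft g g
  simp_rw [inprod, mul_star_eq_norm_sq, avgC, ← Complex.ofReal_sum, ← Complex.ofReal_natCast,
    ← Complex.ofReal_div, Complex.ofReal_inj] at h
  rw [L2, Real.sq_sqrt (by unfold avgR; positivity), avgR, h]

open scoped Classical in
lemma sum_subFinset_character (V : Submodule (ZMod p) (Vec p n)) (ξ : Vec p n) :
    ∑ v ∈ subFinset V, character ξ v =
      if ∀ v ∈ V, ξ ⬝ᵥ v = 0 then ((subFinset V).card : ℂ) else 0 := by
  have hV : ∀ v, v ∈ subFinset V ↔ v ∈ V := by simp [subFinset]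
  let ψ : AddChar V ℂ := (character ξ).compAddMonoidHom V.subtype.toAddMonoidHom
  have hψ : ψ = 0 ↔ ∀ v ∈ V, ξ ⬝ᵥ v = 0 := by
    simp [ψ, AddChar.eq_zero_iff, character_eq_one_iff]
  rw [sum_subtype _ hV, ← Fintype.card_of_subtype _ hV]
  have h := AddChar.sum_eq_ite ψ
  simp only [hψ] at h
  exact h

open scoped Classical in
lemma dft_convMu (f : Vec p n → ℂ) (V : Submodule (ZMod p) (Vec p n)) (ξ : Vec p n) :
    dft (convMu f V) ξ = if ∀ v ∈ V, ξ ⬝ᵥ v = 0 then dft f ξ else 0 := by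
  have hV : ((subFinset V).card : ℂ) ≠ 0 := Nat.cast_ne_zero.mpr <|
    card_ne_zero_of_mem (by simp [subFinset] : (0 : Vec p n) ∈ subFinset V)
  calc dft (convMu f V) ξ
      = (∑ v ∈ subFinset V, dft (fun x => f (x + v)) ξ) / (subFinset V).card := by
        simp_rw [dft, convMu, div_mul_eq_mul_div, ← expect_div, sum_mul, expect_sum_comm]
    _ = _ := by
        simp_rw [dft_translate, ← sum_mul, sum_subFinset_character]
        split_ifs
        · field_simp
        · simp

lemma dft_sub (f g : Vec p n → ℂ) (ξ : Vec p n) :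
    dft (fun x => f x - g x) ξ = dft f ξ - dft g ξ := by
  simp only [dft, sub_mul, expect_sub_distrib]

open scoped Classical in
lemma dft_sub_convMu (f : Vec p n → ℂ) (V : Submodule (ZMod p) (Vec p n)) (ξ : Vec p n) :
    dft (fun x => f x - convMu f V x) ξ =
      if ∀ v ∈ V, ξ ⬝ᵥ v = 0 then 0 else dft f ξ := by
  rw [dft_sub, dft_convMu]
  split_ifs <;> simp

lemma L2_pow_six_le {f h : Vec p n → ℂ} {T κ : ℝ} (hf : U2dual f ≤ T)
    (hcorr : ∀ ξ, dft h ξ * star (dft f ξ) = ((‖dft h ξ‖ ^ 2 : ℝ) : ℂ))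
    (hsmall : ∀ ξ, T ^ 2 * ‖dft h ξ‖ ≤ κ) : L2 h ^ 6 ≤ κ ^ 2 := by
  set X := ∑ ξ, ‖dft h ξ‖ ^ 2
  have hX : 0 ≤ X := by positivity
  have hdual := norm_sum_mul_star_dft_pow_four_le hf (dft h)
  rw [sum_congr rfl fun ξ _ => hcorr ξ, ← Complex.ofReal_sum, Complex.norm_real,
    Real.norm_of_nonneg hX] at hdual
  have hflat : T ^ 4 * ∑ ξ, ‖dft h ξ‖ ^ 4 ≤ κ ^ 2 * X := by
    rw [mul_sum, mul_sum]
    refine sum_le_sum fun ξ _ => ?_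
    have := pow_le_pow_left₀ (by positivity) (hsmall ξ) 2
    calc T ^ 4 * ‖dft h ξ‖ ^ 4 = (T ^ 2 * ‖dft h ξ‖) ^ 2 * ‖dft h ξ‖ ^ 2 := by ring
      _ ≤ _ := by gcongr
  calc L2 h ^ 6 = (L2 h ^ 2) ^ 3 := by ring
    _ = X ^ 3 := by rw [L2_sq]
    _ ≤ κ ^ 2 := pow_three_le_of_pow_four_le_mul hX (sq_nonneg κ) (hdual.trans hflat)

lemma card_large_spectrum_le {f : Vec p n → ℂ} {δ T : ℝ} (hf : U2dual f ≤ T)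
    (hδ : 0 < δ) :
    (#{ξ | δ ^ 3 ≤ T ^ 2 * ‖dft f ξ‖} : ℝ) ≤ δ ^ (-4 : ℤ) * T ^ 4 := by
  set S := ({ξ | δ ^ 3 ≤ T ^ 2 * ‖dft f ξ‖} : Finset (Vec p n))
  have hlarge : δ ^ 3 * #S ≤ T ^ 2 * ∑ ξ ∈ S, ‖dft f ξ‖ := by
    rw [mul_sum, mul_comm]
    simpa using sum_le_sum fun ξ (hξ : ξ ∈ S) => (mem_filter.mp hξ).2
  have hdual := sum_norm_dft_pow_four_le hf S
  have key : (δ ^ 4 * #S) ^ 4 ≤ (T ^ 4) ^ 3 * (δ ^ 4 * #S) := by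
    calc (δ ^ 4 * #S) ^ 4 = δ ^ 4 * (δ ^ 3 * #S) ^ 4 := by ring
      _ ≤ δ ^ 4 * (T ^ 2 * ∑ ξ ∈ S, ‖dft f ξ‖) ^ 4 := by gcongr
      _ = δ ^ 4 * (T ^ 8 * (∑ ξ ∈ S, ‖dft f ξ‖) ^ 4) := by ring
      _ ≤ δ ^ 4 * (T ^ 8 * (T ^ 4 * #S)) := by gcongr
      _ = (T ^ 4) ^ 3 * (δ ^ 4 * #S) := by ring
  have hcube := pow_three_le_of_pow_four_le_mul (by positivity) (by positivity) key
  have := (pow_le_pow_iff_left₀ (by positivity) (by positivity) three_ne_zero).mp hcube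
  rw [zpow_neg, zpow_ofNat, ← div_eq_inv_mul, le_div_iff₀ (by positivity)]
  linarith

end Vec

open Vec in
theorem stmt13_general (p : ℕ) [Fact p.Prime] (n : ℕ) (δ T : ℝ) (hδ : 0 < δ)
    (f : Vec p n → ℂ) (hf : U2dual f ≤ T) :
    ∃ V : Submodule (ZMod p) (Vec p n),
      ((n - Module.finrank (ZMod p) V : ℕ) : ℝ) ≤ δ ^ (-4 : ℤ) * T ^ 4 ∧
      L2 (fun x => f x - convMu f V x) ≤ δ := by
  classical
  set S := ({ξ | δ ^ 3 ≤ T ^ 2 * ‖dft f ξ‖} : Finset (Vec p n))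
  set A : Matrix S (Fin n) (ZMod p) := Matrix.of fun ξ => ξ.1
  have hSV : ∀ ξ ∈ S, ∀ v ∈ LinearMap.ker A.mulVecLin, ξ ⬝ᵥ v = 0 :=
    fun ξ hξ v hv => congr_fun (LinearMap.mem_ker.mp hv) ⟨ξ, hξ⟩
  refine ⟨LinearMap.ker A.mulVecLin, ?_, ?_⟩
  · calc ((n - Module.finrank (ZMod p) (LinearMap.ker A.mulVecLin) : ℕ) : ℝ) ≤ #S := by
          simpa using (Matrix.codim_ker_mulVecLin_le A).trans (Fintype.card_coe S).le
      _ ≤ δ ^ (-4 : ℤ) * T ^ 4 := card_large_spectrum_le hf hδ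
  · refine (pow_le_pow_iff_left₀ (Real.sqrt_nonneg _) hδ.le (by norm_num : 6 ≠ 0)).mp ?_
    refine (L2_pow_six_le (κ := δ ^ 3) hf (fun ξ => ?_) (fun ξ => ?_)).trans_eq (by ring)
    · rw [dft_sub_convMu]
      split_ifs
      · simp
      · exact mul_star_eq_norm_sq _
    · rw [dft_sub_convMu]
      split_ifs with h
      · rw [norm_zero, mul_zero]
        positivity
      · exact not_lt.mp fun hlt => h (hSV ξ (by simpa [S] using hlt.le))

/-- Lemma 5.2, Bogolyubov. If `‖f‖_{U²}^* ≤ T`, then there is a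
subspace `V` of codimension at most `δ⁻⁴T⁴` with `‖f - f*μ_V‖₂ ≤ δ`. -/
theorem stmt13 (p : ℕ) [Fact p.Prime] (n : ℕ) (δ T : ℝ) (hδ : 0 < δ) (hT : 0 < T)
    (f : Vec p n → ℂ) (hf : U2dual f ≤ T) :
    ∃ V : Submodule (ZMod p) (Vec p n),
      ((n - Module.finrank (ZMod p) V : ℕ) : ℝ) ≤ δ ^ (-4 : ℤ) * T ^ 4 ∧
      L2 (fun x => f x - convMu f V x) ≤ δ :=
  stmt13_general p n δ T hδ f hf
end

section
/- Let p be a prime, let V be a linear subspace of 𝔽_p^n of codimension r, and let f : 𝔽_p^n → ℂ be a function that is constant on the cosets of V. Then ‖f‖_{U^2} ≥ p^{−r/4}‖f‖_2 and ‖f‖_{U^2}^* ≤ p^{r/4}‖f‖_2. -/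
/-!
Write `A_g(a) = ∑ₓ g(x) conj g(x + a)` for the autocorrelation of `g`, so that
`‖g‖_{U²}⁴ = N⁻³ ∑ₐ |A_g(a)|²` with `N = pⁿ`. Averaging `g` over the cosets of `V` (with `M = |V|`)
gives `g * μ_V`, whose squared `L²` norm is `(MN)⁻¹ ∑_{a ∈ V} A_g(a)`; Cauchy–Schwarz over `V`
then yields `‖g * μ_V‖₂⁴ ≤ (N / M) ‖g‖_{U²}⁴ = p^r ‖g‖_{U²}⁴`. A function constant on the cosets
of `V` equals its own average, which gives the first inequality, and `⟨g, f⟩ = ⟨g * μ_V, f⟩`,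
which together with Cauchy–Schwarz gives the second.
-/

open scoped BigOperators

open Finset

lemma norm_sum_sq_le_card_mul_sum_norm_sq {ι : Type*} (s : Finset ι) (z : ι → ℂ) :
    ‖∑ i ∈ s, z i‖ ^ 2 ≤ #s * ∑ i ∈ s, ‖z i‖ ^ 2 :=
  (pow_le_pow_left₀ (norm_nonneg _) (norm_sum_le _ _) 2).trans (sq_sum_le_card_mul_sum_sq ..)

lemma le_rpow_div_four_mul_of_pow_four_le {P x y r : ℝ} (hP : 0 ≤ P) (hy : 0 ≤ y)
    (h : x ^ 4 ≤ P ^ r * y ^ 4) : x ≤ P ^ (r / 4) * y := by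
  refine le_of_pow_le_pow_left₀ four_ne_zero (by positivity) (h.trans_eq ?_)
  rw [mul_pow, ← Real.rpow_natCast (P ^ (r / 4)), ← Real.rpow_mul hP]
  norm_num

section GowersNorm

variable {p n : ℕ} [NeZero p]

lemma L2_nonneg (f : Vec p n → ℂ) : 0 ≤ L2 f := Real.sqrt_nonneg _

lemma L2_sq (f : Vec p n → ℂ) :
    L2 f ^ 2 = (∑ x, ‖f x‖ ^ 2) / Fintype.card (Vec p n) :=
  Real.sq_sqrt (div_nonneg (sum_nonneg fun _ _ => by positivity) (Nat.cast_nonneg _))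

lemma norm_inprod_le_L2_mul_L2 (u w : Vec p n → ℂ) :
    ‖inprod u w‖ ≤ L2 u * L2 w := by
  set N : ℝ := (Fintype.card (Vec p n) : ℝ)
  calc ‖inprod u w‖ ≤ (∑ x, ‖u x‖ * ‖w x‖) / N := by
        rw [inprod, avgC, norm_div, Complex.norm_natCast]
        gcongr
        exact (norm_sum_le _ _).trans_eq (by simp only [norm_mul, norm_star])
    _ ≤ √(∑ x, ‖u x‖ ^ 2) * √(∑ x, ‖w x‖ ^ 2) / N := by
        gcongr
        exact Real.sum_mul_le_sqrt_mul_sqrt _ _ _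
    _ = L2 u * L2 w := by
        have hN : 0 ≤ N := Nat.cast_nonneg _
        rw [L2, L2, avgR, avgR, Real.sqrt_div' _ hN, Real.sqrt_div' _ hN, div_mul_div_comm,
          Real.mul_self_sqrt hN]

lemma U2_nonneg (g : Vec p n → ℂ) : 0 ≤ U2 g :=
  Real.rpow_nonneg (norm_nonneg _) _

noncomputable def autocorr (g : Vec p n → ℂ) (a : Vec p n) : ℂ :=
  ∑ x, g x * star (g (x + a))

lemma sum_star_mul_shift_eq_star_autocorr (g : Vec p n → ℂ) (x a : Vec p n) :
    ∑ b, star (g (x + b)) * g (x + a + b) = star (autocorr g a) := by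
  rw [autocorr, star_sum]
  refine Fintype.sum_equiv (Equiv.addLeft x) _ _ fun b => ?_
  simp only [Equiv.coe_addLeft, star_mul', star_star, add_right_comm x a b]

lemma U2_pow_four (g : Vec p n → ℂ) :
    U2 g ^ 4 = (∑ a, ‖autocorr g a‖ ^ 2) / (Fintype.card (Vec p n) : ℝ) ^ 3 := by
  have hsum : ∑ t : Vec p n × Vec p n × Vec p n,
      g t.1 * star (g (t.1 + t.2.1)) * star (g (t.1 + t.2.2)) * g (t.1 + t.2.1 + t.2.2) =
      ((∑ a, ‖autocorr g a‖ ^ 2 : ℝ) : ℂ) := by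
    simp only [Fintype.sum_prod_type, Complex.ofReal_sum]
    rw [sum_comm]
    refine sum_congr rfl fun a _ => ?_
    simp_rw [mul_assoc, ← mul_sum, sum_star_mul_shift_eq_star_autocorr, ← mul_assoc, ← sum_mul]
    exact (Complex.mul_conj' (autocorr g a)).trans (Complex.ofReal_pow _ _).symm
  rw [U2, avgC, hsum, ← Real.rpow_natCast, ← Real.rpow_mul (norm_nonneg _), Nat.cast_ofNat,
    one_div_mul_cancel four_ne_zero, Real.rpow_one, norm_div, Complex.norm_real,
    Real.norm_of_nonneg (by positivity)]
  simp [Fintype.card_prod, pow_three]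

end GowersNorm

section CosetAverage

variable {p n : ℕ} [NeZero p] {V : Submodule (ZMod p) (Vec p n)}

lemma mem_subFinset {v : Vec p n} : v ∈ subFinset V ↔ v ∈ V := by
  classical
  simp [subFinset]

lemma card_subFinset (V : Submodule (ZMod p) (Vec p n)) : #(subFinset V) = Nat.card V := by
  classical
  simp [subFinset, ← Fintype.card_subtype, Nat.card_eq_fintype_card]

lemma card_subFinset_pos (V : Submodule (ZMod p) (Vec p n)) : 0 < #(subFinset V) :=
  card_pos.2 ⟨0, mem_subFinset.2 V.zero_mem⟩

lemma sum_norm_sq_coset_sum_eq (V : Submodule (ZMod p) (Vec p n)) (g : Vec p n → ℂ) :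
    ((∑ x, ‖∑ v ∈ subFinset V, g (x + v)‖ ^ 2 : ℝ) : ℂ) =
      #(subFinset V) * ∑ a ∈ subFinset V, autocorr g a := by
  have hshift : ∀ v ∈ subFinset V,
      ∑ x, ∑ w ∈ subFinset V, g (x + v) * star (g (x + w)) =
        ∑ a ∈ subFinset V, autocorr g a := by
    intro v hv
    rw [sum_comm]
    refine sum_nbij' (· - v) (· + v) (fun w hw => ?_) (fun a ha => ?_)
      (fun w _ => sub_add_cancel w v) (fun a _ => add_sub_cancel_right a v) fun w _ => ?_
    · exact mem_subFinset.2 (V.sub_mem (mem_subFinset.1 hw) (mem_subFinset.1 hv))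
    · exact mem_subFinset.2 (V.add_mem (mem_subFinset.1 ha) (mem_subFinset.1 hv))
    · refine Fintype.sum_equiv (Equiv.addRight v) _ _ fun x => ?_
      simp only [Equiv.coe_addRight, add_add_sub_cancel]
  calc ((∑ x, ‖∑ v ∈ subFinset V, g (x + v)‖ ^ 2 : ℝ) : ℂ)
      = ∑ x, ∑ v ∈ subFinset V, ∑ w ∈ subFinset V, g (x + v) * star (g (x + w)) := by
        push_cast
        refine sum_congr rfl fun x _ => ?_
        rw [← Complex.mul_conj', starRingEnd_apply, star_sum, sum_mul_sum]
    _ = #(subFinset V) * ∑ a ∈ subFinset V, autocorr g a := by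
        rw [sum_comm, sum_congr rfl hshift, sum_const, nsmul_eq_mul]

lemma L2_convMu_pow_four_le (V : Submodule (ZMod p) (Vec p n)) (g : Vec p n → ℂ) :
    L2 (convMu g V) ^ 4 ≤ (Fintype.card (Vec p n) / #(subFinset V) : ℝ) * U2 g ^ 4 := by
  set N : ℝ := (Fintype.card (Vec p n) : ℝ)
  set M : ℝ := (#(subFinset V) : ℝ)
  set S := ∑ a ∈ subFinset V, autocorr g a
  have hM : 0 < M := Nat.cast_pos.2 (card_subFinset_pos V)
  have hN : 0 < N := by positivity
  have hsum : ∑ x, ‖∑ v ∈ subFinset V, g (x + v)‖ ^ 2 = M * ‖S‖ := by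
    have := congrArg norm (sum_norm_sq_coset_sum_eq V g)
    rwa [Complex.norm_real, Real.norm_of_nonneg (by positivity), norm_mul,
      Complex.norm_natCast] at this
  have hL2 : L2 (convMu g V) ^ 2 = ‖S‖ / (M * N) := by
    simp only [L2_sq, convMu, norm_div, div_pow, Complex.norm_natCast, ← sum_div, hsum]
    change M * ‖S‖ / M ^ 2 / N = _
    field_simp
  have hS : ‖S‖ ^ 2 ≤ M * (N ^ 3 * U2 g ^ 4) := by
    rw [U2_pow_four, mul_div_cancel₀ _ (by positivity)]
    exact (norm_sum_sq_le_card_mul_sum_norm_sq _ _).trans <| mul_le_mul_of_nonneg_left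
      (sum_le_sum_of_subset_of_nonneg (subset_univ _) fun _ _ _ => by positivity) hM.le
  calc L2 (convMu g V) ^ 4 = ‖S‖ ^ 2 / (M * N) ^ 2 := by rw [← div_pow, ← hL2, ← pow_mul]
    _ ≤ M * (N ^ 3 * U2 g ^ 4) / (M * N) ^ 2 := by gcongr
    _ = N / M * U2 g ^ 4 := by field_simp

variable {f : Vec p n → ℂ} (hf : ∀ x, ∀ v ∈ V, f (x + v) = f x)
include hf

lemma convMu_eq_self : convMu f V = f := by
  funext x
  rw [convMu, sum_congr rfl fun v hv => hf x v (mem_subFinset.1 hv), sum_const, nsmul_eq_mul,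
    mul_div_cancel_left₀ _ (Nat.cast_ne_zero.2 (card_subFinset_pos V).ne')]

lemma inprod_convMu_left (g : Vec p n → ℂ) : inprod (convMu g V) f = inprod g f := by
  have hshift : ∀ v ∈ subFinset V, ∑ x, g (x + v) * star (f x) = ∑ x, g x * star (f x) := by
    intro v hv
    refine Fintype.sum_equiv (Equiv.addRight v) _ _ fun x => ?_
    simp [hf x v (mem_subFinset.1 hv)]
  have hsum : ∑ x, convMu g V x * star (f x) = ∑ x, g x * star (f x) := calc
    ∑ x, convMu g V x * star (f x)
        = (∑ v ∈ subFinset V, ∑ x, g (x + v) * star (f x)) / #(subFinset V) := by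
          simp only [convMu, div_mul_eq_mul_div, sum_mul, ← sum_div]
          rw [sum_comm]
    _ = ∑ x, g x * star (f x) := by
          rw [sum_congr rfl hshift, sum_const, nsmul_eq_mul,
            mul_div_cancel_left₀ _ (Nat.cast_ne_zero.2 (card_subFinset_pos V).ne')]
  rw [inprod, inprod, avgC, avgC, hsum]

end CosetAverage

section PrimeField

variable {p n : ℕ} [Fact p.Prime]

lemma card_div_card_subFinset (V : Submodule (ZMod p) (Vec p n)) :
    (Fintype.card (Vec p n) / #(subFinset V) : ℝ) =
      (p : ℝ) ^ (n - Module.finrank (ZMod p) V) := by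
  have hle : Module.finrank (ZMod p) V ≤ n :=
    (Submodule.finrank_le V).trans_eq (Module.finrank_fin_fun _)
  rw [card_subFinset, Module.natCard_eq_pow_finrank (K := ZMod p), Nat.card_zmod,
    Fintype.card_fun, ZMod.card, Fintype.card_fin]
  push_cast
  rw [pow_sub₀ _ (Nat.cast_ne_zero.2 (Fact.out : p.Prime).ne_zero) hle, div_eq_mul_inv]

lemma L2_convMu_le_rpow_mul_U2 (V : Submodule (ZMod p) (Vec p n)) (g : Vec p n → ℂ) :
    L2 (convMu g V) ≤ (p : ℝ) ^ (((n - Module.finrank (ZMod p) V : ℕ) : ℝ) / 4) * U2 g := by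
  refine le_rpow_div_four_mul_of_pow_four_le (Nat.cast_nonneg _) (U2_nonneg g) ?_
  rw [Real.rpow_natCast, ← card_div_card_subFinset]
  exact L2_convMu_pow_four_le V g

end PrimeField

/-- Lemma 5.5. If `f` is constant on cosets of a subspace `V` of
codimension `r`, then `‖f‖_{U²} ≥ p^{-r/4}‖f‖₂` and `‖f‖_{U²}^* ≤ p^{r/4}‖f‖₂`. -/
theorem stmt15 (p : ℕ) [Fact p.Prime] (n : ℕ)
    (V : Submodule (ZMod p) (Vec p n)) (r : ℕ)
    (hr : n - Module.finrank (ZMod p) V = r)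
    (f : Vec p n → ℂ) (hconst : ∀ x : Vec p n, ∀ v ∈ V, f (x + v) = f x) :
    (p : ℝ) ^ (-(r : ℝ) / 4) * L2 f ≤ U2 f ∧
    U2dual f ≤ (p : ℝ) ^ ((r : ℝ) / 4) * L2 f := by
  subst hr
  have hp : (0 : ℝ) < p := Nat.cast_pos.2 (Fact.out : p.Prime).pos
  constructor
  · have hf := L2_convMu_le_rpow_mul_U2 V f
    rw [convMu_eq_self hconst] at hf
    calc _ ≤ (p : ℝ) ^ (-_ / 4 : ℝ) * ((p : ℝ) ^ (_ / 4 : ℝ) * U2 f) := by gcongr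
      _ = U2 f := by
        rw [← mul_assoc, ← Real.rpow_add hp, neg_div, neg_add_cancel, Real.rpow_zero, one_mul]
  · refine Real.sSup_le ?_ (mul_nonneg (by positivity) (L2_nonneg f))
    rintro _ ⟨g, hg, rfl⟩
    calc ‖inprod g f‖ = ‖inprod (convMu g V) f‖ := by rw [inprod_convMu_left hconst]
      _ ≤ L2 (convMu g V) * L2 f := norm_inprod_le_L2_mul_L2 _ _
      _ ≤ (p : ℝ) ^ (_ / 4 : ℝ) * U2 g * L2 f := by
        gcongr
        · exact L2_nonneg f
        · exact L2_convMu_le_rpow_mul_U2 V g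
      _ ≤ _ := by
        gcongr
        · exact L2_nonneg f
        · exact mul_le_of_le_one_right (by positivity) hg
end

section
/- Let p be a prime, and suppose that L_i(x) = Σ_{u=1}^d c_{iu}x_u, i = 1,2,…,m, is a square-independent system of linear forms over 𝔽_p. Let V be a linear subspace of 𝔽_p^n and let β_1,…,β_m be (not necessarily distinct) bilinear forms on V, each of rank at least r. Then at least one of the bilinear forms β_{uv} = Σ_{i=1}^m c_{iu}c_{iv}β_i (for (u,v) ∈ {1,…,d}²) has rank at least r/m. -/
open scoped BigOperators

/-! Square-independence says that the `m × d²` matrix with rows `(c_{iu} c_{iv})_{(u,v)}` has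
full row rank, so its columns `(c_{iu} c_{iv})_i` span `𝔽_p^m` and `m` of them form a basis.
Expanding a unit vector `e_i` in that basis writes `β_i` as a combination of `m` of the forms
`β_{uv}`. Since the rank of bilinear forms is subadditive and does not grow under scaling,
`r ≤ rank β_i ≤ m · max_{u,v} rank β_{uv}`. -/

open Module

theorem Matrix.span_col_eq_top_of_linearIndependent_row {ι κ K : Type*} [Field K] [Fintype ι]
    [Fintype κ] {A : Matrix ι κ K} (hA : LinearIndependent K A.row) :
    Submodule.span K (Set.range A.col) = ⊤ :=
  Submodule.eq_top_of_finrank_eq <| by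
    rw [← A.rank_eq_finrank_span_cols, hA.rank_matrix, finrank_fintype_fun_eq_card]

theorem Submodule.finrank_sub_finrank_inf_le {K M : Type*} [DivisionRing K] [AddCommGroup M]
    [Module K M] [FiniteDimensional K M] {W A B : Submodule K M} (hA : A ≤ W) (hB : B ≤ W) :
    finrank K W - finrank K ↥(A ⊓ B) ≤
      (finrank K W - finrank K A) + (finrank K W - finrank K B) := by
  have := Submodule.finrank_sup_add_finrank_inf_eq A B
  have := Submodule.finrank_mono (sup_le hA hB)
  have := Submodule.finrank_mono (inf_le_left : A ⊓ B ≤ A)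
  omega

theorem exists_le_finrank_mul_of_span_eq_top {K M ι : Type*} [Field K] [AddCommGroup M]
    [Module K M] [FiniteDimensional K M] [Finite ι] [Nonempty ι] (ρ : M → ℕ) (h_zero : ρ 0 = 0)
    (h_add : ∀ x y, ρ (x + y) ≤ ρ x + ρ y) (h_smul : ∀ (a : K) x, ρ (a • x) ≤ ρ x)
    {w : ι → M} (hw : Submodule.span K (Set.range w) = ⊤) (x : M) :
    ∃ j, ρ x ≤ finrank K M * ρ (w j) := by
  obtain ⟨κ, a, ha, hspan, hli⟩ := exists_linearIndependent' K w
  have : Fintype κ := @Fintype.ofFinite κ (Finite.of_injective a ha)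
  let b : Module.Basis κ K M := .mk hli (hspan.trans hw).ge
  obtain ⟨j, hj⟩ := Finite.exists_max (ρ ∘ w)
  refine ⟨j, ?_⟩
  calc ρ x = ρ (∑ k, b.repr x k • w (a k)) := by
        conv_lhs => rw [← b.sum_repr x]
        simp only [b, Module.Basis.mk_apply, Function.comp_apply]
    _ ≤ ∑ k, ρ (w (a k)) :=
      (Finset.le_sum_of_subadditive ρ h_zero.le h_add _ _).trans
        (Finset.sum_le_sum fun k _ => h_smul _ _)
    _ ≤ ∑ _k : κ, ρ (w j) := Finset.sum_le_sum fun k _ => hj (a k)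
    _ = finrank K M * ρ (w j) := by
      rw [Finset.sum_const, smul_eq_mul, Finset.card_univ, finrank_eq_card_basis b]

section BilinearRank

variable {p n : ℕ}

theorem bRadical_eq_inf_orthogonalBilin (W : Submodule (ZMod p) (Vec p n))
    (β : Vec p n →ₗ[ZMod p] Vec p n →ₗ[ZMod p] ZMod p) :
    bRadical W β = W ⊓ W.orthogonalBilin β :=
  Submodule.span_eq (W ⊓ W.orthogonalBilin β)

theorem bRadical_le (W : Submodule (ZMod p) (Vec p n))
    (β : Vec p n →ₗ[ZMod p] Vec p n →ₗ[ZMod p] ZMod p) : bRadical W β ≤ W :=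
  (bRadical_eq_inf_orthogonalBilin W β).trans_le inf_le_left

theorem inf_bRadical_le_bRadical_add (W : Submodule (ZMod p) (Vec p n))
    (β γ : Vec p n →ₗ[ZMod p] Vec p n →ₗ[ZMod p] ZMod p) :
    bRadical W β ⊓ bRadical W γ ≤ bRadical W (β + γ) := by
  simp only [bRadical_eq_inf_orthogonalBilin]
  rintro y ⟨⟨hyW, hβ⟩, -, hγ⟩
  exact ⟨hyW, fun x hx => by simp [hβ x hx, hγ x hx]⟩

theorem bRadical_le_bRadical_smul (W : Submodule (ZMod p) (Vec p n)) (a : ZMod p)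
    (β : Vec p n →ₗ[ZMod p] Vec p n →ₗ[ZMod p] ZMod p) :
    bRadical W β ≤ bRadical W (a • β) := by
  simp only [bRadical_eq_inf_orthogonalBilin]
  rintro y ⟨hyW, hβ⟩
  exact ⟨hyW, fun x hx => by simp [hβ x hx]⟩

theorem bRadical_zero (W : Submodule (ZMod p) (Vec p n)) : bRadical W 0 = W := by
  rw [bRadical_eq_inf_orthogonalBilin, inf_eq_left]
  exact fun y _ x _ => rfl

theorem bRankOn_zero (W : Submodule (ZMod p) (Vec p n)) : bRankOn W 0 = 0 := by
  rw [bRankOn, bRadical_zero, Nat.sub_self]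

variable [Fact p.Prime]

theorem bRankOn_add_le (W : Submodule (ZMod p) (Vec p n))
    (β γ : Vec p n →ₗ[ZMod p] Vec p n →ₗ[ZMod p] ZMod p) :
    bRankOn W (β + γ) ≤ bRankOn W β + bRankOn W γ := by
  have := Submodule.finrank_mono (inf_bRadical_le_bRadical_add W β γ)
  have := Submodule.finrank_sub_finrank_inf_le (bRadical_le W β) (bRadical_le W γ)
  unfold bRankOn
  omega

theorem bRankOn_smul_le (W : Submodule (ZMod p) (Vec p n)) (a : ZMod p)
    (β : Vec p n →ₗ[ZMod p] Vec p n →ₗ[ZMod p] ZMod p) :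
    bRankOn W (a • β) ≤ bRankOn W β :=
  Nat.sub_le_sub_left (Submodule.finrank_mono (bRadical_le_bRadical_smul W a β)) _

end BilinearRank

/-- Corollary 6.4. Given a square-independent system of linear forms
with coefficients `c` and bilinear forms `β₁,…,β_m` on `V` each of rank at least `r`, at
least one of the combinations `β_{uv} = ∑ᵢ c_{iu}c_{iv}βᵢ` has rank at least `r/m`. -/
theorem stmt18 (p : ℕ) [Fact p.Prime] (n d m : ℕ) (hm : 0 < m)
    (c : Fin m → Fin d → ZMod p)
    (hsq : LinearIndependent (ZMod p)
      (fun i : Fin m => Matrix.of (fun u v : Fin d => c i u * c i v)))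
    (V : Submodule (ZMod p) (Vec p n))
    (β : Fin m → (Vec p n →ₗ[ZMod p] Vec p n →ₗ[ZMod p] ZMod p))
    (r : ℕ) (hβ : ∀ i, r ≤ bRankOn V (β i)) :
    ∃ u v : Fin d,
      (r : ℝ) / m ≤ (bRankOn V (∑ i, (c i u * c i v) • β i) : ℝ) := by
  let i₀ : Fin m := ⟨0, hm⟩
  have hd : 0 < d := Nat.pos_of_ne_zero fun hd =>
    hsq.ne_zero i₀ (by subst hd; exact Subsingleton.elim _ _)
  have : Nonempty (Fin d × Fin d) := ⟨(⟨0, hd⟩, ⟨0, hd⟩)⟩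
  let A : Matrix (Fin m) (Fin d × Fin d) (ZMod p) := .of fun i uv => c i uv.1 * c i uv.2
  have hA : LinearIndependent (ZMod p) A.row :=
    hsq.map' (LinearEquiv.curry (ZMod p) (ZMod p) (Fin d) (Fin d)).symm.toLinearMap
      (LinearEquiv.ker _)
  let ρ (t : Fin m → ZMod p) : ℕ := bRankOn V (Fintype.linearCombination (ZMod p) β t)
  obtain ⟨⟨u, v⟩, huv⟩ := exists_le_finrank_mul_of_span_eq_top ρ
    (by simp only [ρ, map_zero, bRankOn_zero])
    (fun s t => by simpa only [ρ, map_add] using bRankOn_add_le V _ _)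
    (fun a t => by simpa only [ρ, map_smul] using bRankOn_smul_le V a _)
    (Matrix.span_col_eq_top_of_linearIndependent_row hA) (Pi.single i₀ 1)
  refine ⟨u, v, ?_⟩
  have hρ₀ : ρ (Pi.single i₀ 1) = bRankOn V (β i₀) := by
    simp [ρ, Fintype.linearCombination_apply_single]
  rw [hρ₀, finrank_fin_fun] at huv
  rw [div_le_iff₀ (by exact_mod_cast hm), mul_comm]
  exact_mod_cast (hβ i₀).trans huv
end
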